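/- arXiv:2605.18620 — 5 statements merged into one kernel-verified Lean document; each statement's English description precedes it below -/
import Mathlib

section
/- Fix a real number a ≥ 1. Then lim_{u→0⁺} Φ(a·Φ⁻¹(u)) / ( u^{a²} (log(1/u))^{(a²-1)/2} ) = (4π)^{(a²-1)/2}/a. Moreover there is a constant C_a < ∞ such that Φ(a·Φ⁻¹(u)) ≤ C_a · u^{a²} (log(1/u))^{(a²-1)/2} for all u ∈ (0, 1/2]. -/
open Filter Set

/-- The standard normal cumulative distribution function
`Φ(t) = ∫_{-∞}^t e^{-z²/2}/√(2π) dz`. -/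
noncomputable def stdNormalCDF (t : ℝ) : ℝ :=
  ∫ z in Set.Iic t, Real.exp (-z ^ 2 / 2) / Real.sqrt (2 * Real.pi)

/-- The inverse function `Φ⁻¹ : (0,1) → ℝ` of the standard normal CDF. -/
noncomputable def stdNormalCDFInv : ℝ → ℝ :=
  Function.invFun stdNormalCDF

open MeasureTheory Topology

namespace TailAux

/-- the unnormalized gaussian -/
noncomputable def G (z : ℝ) : ℝ := Real.exp (-z ^ 2 / 2)

lemma G_pos (z : ℝ) : 0 < G z := Real.exp_pos _

lemma G_cont : Continuous G := by
  unfold G; continuity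

lemma G_int : Integrable G := by
  have h : Integrable fun z : ℝ => Real.exp (-(1/2 : ℝ) * z ^ 2) :=
    integrable_exp_neg_mul_sq (by norm_num)
  refine h.congr ?_
  · exact .of_forall fun z => by unfold G; ring_nf

lemma G_total : ∫ z, G z = Real.sqrt (2 * Real.pi) := by
  have h := integral_gaussian (1/2 : ℝ)
  have h2 : (fun z : ℝ => Real.exp (-(1/2 : ℝ) * z ^ 2)) = G := by
    funext z; unfold G; ring_nf
  rw [h2] at h
  rw [h]; congr 1; ring

/-- the unnormalized upper tail -/
noncomputable def Psi (s : ℝ) : ℝ := ∫ z in Set.Ioi s, G z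

lemma Phi_eq (t : ℝ) : stdNormalCDF t = (∫ z in Set.Iic t, G z) / Real.sqrt (2 * Real.pi) := by
  unfold stdNormalCDF G
  rw [integral_div]

lemma Iic_eq_Psi (t : ℝ) : (∫ z in Set.Iic t, G z) = Psi (-t) := by
  unfold Psi
  have : (∫ z in Set.Ioi (-t), G (-z)) = ∫ z in Set.Iic (- -t), G z := integral_comp_neg_Ioi (-t) G
  rw [neg_neg] at this
  rw [← this]
  refine setIntegral_congr_fun measurableSet_Ioi fun z _ => ?_
  unfold G; ring_nf

lemma Phi_eq_Psi (t : ℝ) : stdNormalCDF t = Psi (-t) / Real.sqrt (2 * Real.pi) := by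
  rw [Phi_eq, Iic_eq_Psi]

end TailAux

namespace TailAux

lemma G_deriv (z : ℝ) : HasDerivAt G (-z * G z) z := by
  have h1 : HasDerivAt (fun z : ℝ => -z ^ 2 / 2) (-z) z := by
    have := ((hasDerivAt_pow 2 z).neg).div_const 2
    refine this.congr_deriv ?_
    push_cast; ring
  have := h1.exp
  refine this.congr_deriv ?_
  unfold G; ring

lemma G_tendsto : Tendsto G atTop (𝓝 0) := by
  have h0 : Tendsto (fun z : ℝ => z ^ 2 / 2) atTop atTop :=
    (tendsto_pow_atTop two_ne_zero).atTop_div_const (by norm_num)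
  have h1 : Tendsto (fun z : ℝ => -z ^ 2 / 2) atTop atBot := by
    have := tendsto_neg_atTop_atBot.comp h0
    refine this.congr fun z => ?_
    simp [neg_div]
  exact Real.tendsto_exp_atBot.comp h1

lemma integral_z_gauss {s : ℝ} (hs : 0 < s) :
    ∫ z in Set.Ioi s, z * G z = G s := by
  have hderiv : ∀ x ∈ Set.Ici s, HasDerivAt (fun z => -G z) (x * G x) x := by
    intro x _
    have := (G_deriv x).neg
    refine this.congr_deriv ?_
    ring
  have hpos : ∀ x ∈ Set.Ioi s, 0 ≤ x * G x := fun x hx =>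
    mul_nonneg (le_of_lt (hs.trans hx)) (G_pos x).le
  have htend : Tendsto (fun z => -G z) atTop (𝓝 0) := by
    simpa using G_tendsto.neg
  have := integral_Ioi_of_hasDerivAt_of_nonneg' hderiv hpos htend
  simpa using this

lemma int_z_gauss {s : ℝ} (hs : 0 < s) : IntegrableOn (fun z => z * G z) (Set.Ioi s) := by
  have hderiv : ∀ x ∈ Set.Ici s, HasDerivAt (fun z => -G z) (x * G x) x := by
    intro x _
    have := (G_deriv x).neg
    refine this.congr_deriv ?_
    ring
  have hpos : ∀ x ∈ Set.Ioi s, 0 ≤ x * G x := fun x hx =>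
    mul_nonneg (le_of_lt (hs.trans hx)) (G_pos x).le
  have htend : Tendsto (fun z => -G z) atTop (𝓝 0) := by
    simpa using G_tendsto.neg
  exact integrableOn_Ioi_deriv_of_nonneg' hderiv hpos htend

lemma Psi_le {s : ℝ} (hs : 0 < s) : Psi s ≤ G s / s := by
  have h1 : Psi s ≤ ∫ z in Set.Ioi s, s⁻¹ * (z * G z) := by
    refine setIntegral_mono_on G_int.integrableOn ((int_z_gauss hs).const_mul _)
      measurableSet_Ioi fun z hz => ?_
    have hzs : s < z := hz
    have h2 : 1 ≤ s⁻¹ * z := by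
      rw [inv_mul_eq_div, le_div_iff₀ hs]; linarith
    calc G z = 1 * G z := (one_mul _).symm
    _ ≤ s⁻¹ * z * G z := by
        apply mul_le_mul_of_nonneg_right h2 (G_pos z).le
    _ = s⁻¹ * (z * G z) := by ring
  rw [MeasureTheory.integral_const_mul, integral_z_gauss hs] at h1
  rw [div_eq_inv_mul]; exact h1

set_option maxHeartbeats 1000000 in
lemma lower_deriv {x : ℝ} (hx : x ≠ 0) :
    HasDerivAt (fun z => -((z⁻¹ - (z ^ 3)⁻¹) * G z)) ((1 - 3 / x ^ 4) * G x) x := by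
  have h1 : HasDerivAt (fun z : ℝ => z⁻¹) (-(x ^ 2)⁻¹) x := hasDerivAt_inv hx
  have h3 : HasDerivAt (fun z : ℝ => (z ^ 3)⁻¹)
      (-(3 * x ^ 2 / (x ^ 3) ^ 2)) x := by
    have := ((hasDerivAt_pow 3 x).inv (pow_ne_zero 3 hx))
    refine this.congr_deriv ?_
    push_cast; ring
  have := (((h1.sub h3).mul (G_deriv x)).neg)
  refine this.congr_deriv ?_
  simp only [Pi.sub_apply]
  unfold G
  field_simp
  ring

set_option maxHeartbeats 1000000 in
lemma integral_lower {s : ℝ} (hs : 2 ≤ s) :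
    ∫ z in Set.Ioi s, (1 - 3 / z ^ 4) * G z = (s⁻¹ - (s ^ 3)⁻¹) * G s := by
  have hs0 : (0:ℝ) < s := by linarith
  have hderiv : ∀ x ∈ Set.Ici s, HasDerivAt (fun z => -((z⁻¹ - (z ^ 3)⁻¹) * G z))
      ((1 - 3 / x ^ 4) * G x) x := fun x hx =>
    lower_deriv (by have : (2:ℝ) ≤ x := hs.trans hx; positivity)
  have hpos : ∀ x ∈ Set.Ioi s, 0 ≤ (1 - 3 / x ^ 4) * G x := by
    intro x hx
    have hx2 : (2:ℝ) ≤ x := hs.trans (le_of_lt hx)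
    have hx4 : (16:ℝ) ≤ x ^ 4 := by
      calc (16:ℝ) = 2 ^ 4 := by norm_num
      _ ≤ x ^ 4 := pow_le_pow_left₀ (by norm_num) hx2 4
    have : 3 / x ^ 4 ≤ 1 := by
      rw [div_le_one (by linarith)]; linarith
    exact mul_nonneg (by linarith) (G_pos x).le
  have htend : Tendsto (fun z => -((z⁻¹ - (z ^ 3)⁻¹) * G z)) atTop (𝓝 0) := by
    have h1 : Tendsto (fun z : ℝ => z⁻¹ - (z ^ 3)⁻¹) atTop (𝓝 0) := by
      have := tendsto_inv_atTop_zero.sub (((tendsto_pow_atTop (n := 3) (by norm_num)).inv_tendsto_atTop : Tendsto (fun z : ℝ => (z ^ 3)⁻¹) atTop (𝓝 0)))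
      simpa using this
    have := (h1.mul G_tendsto).neg
    simpa using this
  have := integral_Ioi_of_hasDerivAt_of_nonneg' hderiv hpos htend
  simpa using this

set_option maxHeartbeats 1000000 in
lemma int_lower {s : ℝ} (hs : 2 ≤ s) :
    IntegrableOn (fun z => (1 - 3 / z ^ 4) * G z) (Set.Ioi s) := by
  have hs0 : (0:ℝ) < s := by linarith
  have hderiv : ∀ x ∈ Set.Ici s, HasDerivAt (fun z => -((z⁻¹ - (z ^ 3)⁻¹) * G z))
      ((1 - 3 / x ^ 4) * G x) x := fun x hx =>
    lower_deriv (by have : (2:ℝ) ≤ x := hs.trans hx; positivity)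
  have hpos : ∀ x ∈ Set.Ioi s, 0 ≤ (1 - 3 / x ^ 4) * G x := by
    intro x hx
    have hx2 : (2:ℝ) ≤ x := hs.trans (le_of_lt hx)
    have hx4 : (16:ℝ) ≤ x ^ 4 := by
      calc (16:ℝ) = 2 ^ 4 := by norm_num
      _ ≤ x ^ 4 := pow_le_pow_left₀ (by norm_num) hx2 4
    have : 3 / x ^ 4 ≤ 1 := by
      rw [div_le_one (by linarith)]; linarith
    exact mul_nonneg (by linarith) (G_pos x).le
  have htend : Tendsto (fun z => -((z⁻¹ - (z ^ 3)⁻¹) * G z)) atTop (𝓝 0) := by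
    have h1 : Tendsto (fun z : ℝ => z⁻¹ - (z ^ 3)⁻¹) atTop (𝓝 0) := by
      have := tendsto_inv_atTop_zero.sub (((tendsto_pow_atTop (n := 3) (by norm_num)).inv_tendsto_atTop : Tendsto (fun z : ℝ => (z ^ 3)⁻¹) atTop (𝓝 0)))
      simpa using this
    have := (h1.mul G_tendsto).neg
    simpa using this
  exact integrableOn_Ioi_deriv_of_nonneg' hderiv hpos htend

lemma Psi_ge {s : ℝ} (hs : 2 ≤ s) : (s⁻¹ - (s ^ 3)⁻¹) * G s ≤ Psi s := by
  rw [← integral_lower hs]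
  refine setIntegral_mono_on (int_lower hs) G_int.integrableOn measurableSet_Ioi fun z hz => ?_
  have hz2 : (2:ℝ) ≤ z := hs.trans (le_of_lt hz)
  have : 0 ≤ 3 / z ^ 4 := by positivity
  nlinarith [G_pos z, (G_pos z).le]

end TailAux

namespace TailAux

noncomputable def R (s : ℝ) : ℝ := s * Real.exp (s ^ 2 / 2) * Psi s

lemma G_eq_inv (s : ℝ) : G s = (Real.exp (s ^ 2 / 2))⁻¹ := by
  unfold G
  rw [show -s ^ 2 / 2 = -(s ^ 2 / 2) by ring, Real.exp_neg]

lemma R_le_one {s : ℝ} (hs : 0 < s) : R s ≤ 1 := by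
  have h := Psi_le hs
  have hkey : s * Real.exp (s ^ 2 / 2) * (G s / s) = 1 := by
    rw [G_eq_inv]
    field_simp
  have hpos : (0:ℝ) ≤ s * Real.exp (s ^ 2 / 2) := by positivity
  unfold R
  have h2 := mul_le_mul_of_nonneg_left h hpos
  linarith [hkey]

lemma R_ge {s : ℝ} (hs : 2 ≤ s) : 1 - (s ^ 2)⁻¹ ≤ R s := by
  have hs0 : (0:ℝ) < s := by linarith
  have h := Psi_ge hs
  have hkey : s * Real.exp (s ^ 2 / 2) * ((s⁻¹ - (s ^ 3)⁻¹) * G s) = 1 - (s ^ 2)⁻¹ := by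
    rw [G_eq_inv]
    field_simp
  have hpos : (0:ℝ) ≤ s * Real.exp (s ^ 2 / 2) := by positivity
  unfold R
  have h2 := mul_le_mul_of_nonneg_left h hpos
  linarith [hkey]

lemma R_tendsto : Tendsto R atTop (𝓝 1) := by
  have hlow : Tendsto (fun s : ℝ => 1 - (s ^ 2)⁻¹) atTop (𝓝 1) := by
    have := ((tendsto_pow_atTop (n := 2) two_ne_zero).inv_tendsto_atTop :
        Tendsto (fun s : ℝ => (s ^ 2)⁻¹) atTop (𝓝 0)).const_sub 1
    simpa using this
  refine tendsto_of_tendsto_of_tendsto_of_le_of_le' hlow tendsto_const_nhds ?_ ?_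
  · filter_upwards [eventually_ge_atTop (2:ℝ)] with s hs using R_ge hs
  · filter_upwards [eventually_ge_atTop (2:ℝ)] with s hs using R_le_one (by linarith)

lemma sqrt2pi_pos : 0 < Real.sqrt (2 * Real.pi) :=
  Real.sqrt_pos.mpr (by positivity)

lemma Phi_mono : Monotone stdNormalCDF := by
  intro t1 t2 h
  rw [Phi_eq, Phi_eq]
  have hle : (∫ z in Set.Iic t1, G z) ≤ ∫ z in Set.Iic t2, G z :=
    setIntegral_mono_set G_int.integrableOn (ae_of_all _ fun z => (G_pos z).le)
      (HasSubset.Subset.eventuallyLE (Set.Iic_subset_Iic.mpr h))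
  gcongr

lemma Psi_pos_all (x : ℝ) : 0 < Psi x := by
  have h1 : (∫ z in Set.Ioc x (x + 1), G z) ≤ Psi x := by
    refine setIntegral_mono_set G_int.integrableOn (ae_of_all _ fun z => (G_pos z).le) ?_
    exact HasSubset.Subset.eventuallyLE Set.Ioc_subset_Ioi_self
  have h2 : (0:ℝ) < ∫ z in x..(x + 1), G z := by
    apply intervalIntegral.intervalIntegral_pos_of_pos_on G_int.intervalIntegrable
      (fun z _ => G_pos z) (by linarith)
  rw [intervalIntegral.integral_of_le (by linarith)] at h2
  linarith

lemma Phi_pos (t : ℝ) : 0 < stdNormalCDF t := by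
  rw [Phi_eq_Psi]
  exact div_pos (Psi_pos_all (-t)) sqrt2pi_pos

lemma Iic_add_Ioi (t : ℝ) :
    (∫ z in Set.Iic t, G z) + Psi t = Real.sqrt (2 * Real.pi) := by
  rw [← G_total]
  exact intervalIntegral.integral_Iic_add_Ioi G_int.integrableOn G_int.integrableOn

lemma Phi_lt_one (t : ℝ) : stdNormalCDF t < 1 := by
  rw [Phi_eq]
  rw [div_lt_one sqrt2pi_pos]
  have h1 := Iic_add_Ioi t
  have h2 := Psi_pos_all t
  linarith

lemma Phi_eq_one_sub (t : ℝ) :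
    stdNormalCDF t = 1 - Psi t / Real.sqrt (2 * Real.pi) := by
  have h := Iic_add_Ioi t
  rw [Phi_eq, eq_sub_iff_add_eq, ← add_div, div_eq_one_iff_eq sqrt2pi_pos.ne']
  exact h

lemma Iic_tendsto_atBot : Tendsto (fun t => ∫ z in Set.Iic t, G z) atBot (𝓝 0) := by
  have h := intervalIntegral_tendsto_integral_Iic (μ := volume) (a := fun t : ℝ => t) 0
    G_int.integrableOn tendsto_id
  have heq : ∀ t : ℝ, (∫ z in Set.Iic t, G z) =
      (∫ z in Set.Iic (0:ℝ), G z) - ∫ z in t..(0:ℝ), G z := by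
    intro t
    have := intervalIntegral.integral_Iic_sub_Iic (μ := volume) (a := t) (b := (0:ℝ))
      G_int.integrableOn G_int.integrableOn
    linarith
  have h2 : Tendsto (fun t : ℝ => (∫ z in Set.Iic (0:ℝ), G z) - ∫ z in t..(0:ℝ), G z)
      atBot (𝓝 0) := by
    have := h.const_sub (∫ z in Set.Iic (0:ℝ), G z)
    simpa using this
  exact Tendsto.congr (fun t => (heq t).symm) h2

lemma Psi_tendsto_atTop : Tendsto Psi atTop (𝓝 0) := by
  have h1 : ∀ t : ℝ, Psi t = ∫ z in Set.Iic (-t), G z := by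
    intro t
    rw [Iic_eq_Psi, neg_neg]
  have := Iic_tendsto_atBot.comp tendsto_neg_atTop_atBot
  exact Tendsto.congr (fun t => (h1 t).symm) this

lemma Phi_tendsto_atBot : Tendsto stdNormalCDF atBot (𝓝 0) := by
  have h : Tendsto (fun t => (∫ z in Set.Iic t, G z) / Real.sqrt (2 * Real.pi)) atBot (𝓝 0) := by
    have := Iic_tendsto_atBot.div_const (Real.sqrt (2 * Real.pi))
    simpa using this
  exact Tendsto.congr (fun t => (Phi_eq t).symm) h

lemma Phi_tendsto_atTop : Tendsto stdNormalCDF atTop (𝓝 1) := by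
  have h : Tendsto (fun t => 1 - Psi t / Real.sqrt (2 * Real.pi)) atTop (𝓝 1) := by
    have := (Psi_tendsto_atTop.div_const (Real.sqrt (2 * Real.pi))).const_sub 1
    simpa using this
  exact Tendsto.congr (fun t => (Phi_eq_one_sub t).symm) h

lemma Phi_cont : Continuous stdNormalCDF := by
  have hprim : Continuous fun t : ℝ => ∫ z in (0:ℝ)..t, G z :=
    intervalIntegral.continuous_primitive (fun a b => G_int.intervalIntegrable) 0
  have heq : ∀ t : ℝ, stdNormalCDF t =
      ((∫ z in Set.Iic (0:ℝ), G z) + ∫ z in (0:ℝ)..t, G z) / Real.sqrt (2 * Real.pi) := by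
    intro t
    rw [Phi_eq]
    congr 1
    have := intervalIntegral.integral_Iic_sub_Iic (μ := volume) (a := (0:ℝ)) (b := t)
      G_int.integrableOn G_int.integrableOn
    linarith
  have h2 : Continuous fun t : ℝ =>
      ((∫ z in Set.Iic (0:ℝ), G z) + ∫ z in (0:ℝ)..t, G z) / Real.sqrt (2 * Real.pi) :=
    (continuous_const.add hprim).div_const _
  exact h2.congr fun t => (heq t).symm

lemma Phi_surj {u : ℝ} (h0 : 0 < u) (h1 : u < 1) : ∃ t, stdNormalCDF t = u := by
  obtain ⟨t1, ht1⟩ := (Phi_tendsto_atBot.eventually (eventually_lt_nhds h0)).exists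
  obtain ⟨t2, ht2⟩ := (Phi_tendsto_atTop.eventually (eventually_gt_nhds h1)).exists
  rcases le_total t1 t2 with h | h
  · obtain ⟨t, _, ht⟩ := intermediate_value_Icc h Phi_cont.continuousOn ⟨ht1.le, ht2.le⟩
    exact ⟨t, ht⟩
  · have := Phi_mono h
    linarith

lemma Phi_inv_eq {u : ℝ} (h0 : 0 < u) (h1 : u < 1) :
    stdNormalCDF (stdNormalCDFInv u) = u :=
  Function.invFun_eq (Phi_surj h0 h1)

lemma PhiInv_tendsto : Tendsto stdNormalCDFInv (nhdsWithin 0 (Set.Ioi 0)) atBot := by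
  rw [tendsto_atBot]
  intro b
  have hmem : Set.Ioo (0:ℝ) (min (stdNormalCDF b) 1) ∈ nhdsWithin (0:ℝ) (Set.Ioi 0) :=
    Ioo_mem_nhdsGT_of_mem ⟨le_refl 0, lt_min (Phi_pos b) one_pos⟩
  filter_upwards [hmem] with u hu
  have h0 : 0 < u := hu.1
  have h1 : u < 1 := lt_of_lt_of_le hu.2 (min_le_right _ _)
  have hub : u < stdNormalCDF b := lt_of_lt_of_le hu.2 (min_le_left _ _)
  by_contra hc
  push_neg at hc
  have := Phi_mono hc.le
  rw [Phi_inv_eq h0 h1] at this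
  linarith

end TailAux

namespace TailAux

lemma R_pos {s : ℝ} (hs : 0 < s) : 0 < R s :=
  mul_pos (mul_pos hs (Real.exp_pos _)) (Psi_pos_all s)

lemma Psi_decomp {s : ℝ} (hs : s ≠ 0) : Psi s = R s * G s / s := by
  unfold R
  rw [G_eq_inv]
  field_simp

noncomputable def M (s : ℝ) : ℝ := Real.log (1 / stdNormalCDF (-s)) / (s ^ 2 / 2)

lemma log_Phi {s : ℝ} (hs : 0 < s) : Real.log (stdNormalCDF (-s)) =
    Real.log (R s) - s ^ 2 / 2 - Real.log s - Real.log (Real.sqrt (2 * Real.pi)) := by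
  have hR := R_pos hs
  rw [Phi_eq_Psi, neg_neg, Psi_decomp hs.ne',
    Real.log_div (div_pos (mul_pos hR (G_pos s)) hs).ne' sqrt2pi_pos.ne',
    Real.log_div (mul_pos hR (G_pos s)).ne' hs.ne',
    Real.log_mul hR.ne' (G_pos s).ne']
  have hG : Real.log (G s) = -s ^ 2 / 2 := by unfold G; exact Real.log_exp _
  rw [hG]
  ring

lemma log_one_div_Phi {s : ℝ} (hs : 0 < s) : Real.log (1 / stdNormalCDF (-s)) =
    s ^ 2 / 2 + Real.log s + Real.log (Real.sqrt (2 * Real.pi)) - Real.log (R s) := by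
  rw [one_div, Real.log_inv, log_Phi hs]
  ring

lemma M_tendsto : Tendsto M atTop (𝓝 1) := by
  have hloga : Tendsto (fun s : ℝ => Real.log s / (s ^ 2 / 2)) atTop (𝓝 0) := by
    have h1 : Tendsto (fun s : ℝ => Real.log s / s) atTop (𝓝 0) :=
      Real.isLittleO_log_id_atTop.tendsto_div_nhds_zero
    have h2 : Tendsto (fun s : ℝ => 2 / s) atTop (𝓝 0) :=
      tendsto_const_nhds.div_atTop tendsto_id
    have h3 := h1.mul h2
    rw [mul_zero] at h3
    refine h3.congr' ?_
    filter_upwards [eventually_gt_atTop (0:ℝ)] with s hs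
    rw [div_mul_div_comm, div_div_eq_mul_div, ← pow_two]
  have hlogR : Tendsto (fun s : ℝ => Real.log (R s)) atTop (𝓝 0) := by
    have := (Real.continuousAt_log one_ne_zero).tendsto.comp R_tendsto
    simpa [Function.comp_def] using this
  have hinv : Tendsto (fun s : ℝ => (s ^ 2 / 2)⁻¹) atTop (𝓝 0) := by
    have h0 : Tendsto (fun s : ℝ => s ^ 2 / 2) atTop atTop :=
      (tendsto_pow_atTop two_ne_zero).atTop_div_const (by norm_num)
    exact h0.inv_tendsto_atTop
  have hb : Tendsto (fun s : ℝ =>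
      (Real.log (Real.sqrt (2 * Real.pi)) - Real.log (R s)) * (s ^ 2 / 2)⁻¹) atTop (𝓝 0) := by
    have := (hlogR.const_sub (Real.log (Real.sqrt (2 * Real.pi)))).mul hinv
    simpa using this
  have htot : Tendsto (fun s : ℝ => 1 + (Real.log s / (s ^ 2 / 2) +
      (Real.log (Real.sqrt (2 * Real.pi)) - Real.log (R s)) * (s ^ 2 / 2)⁻¹)) atTop (𝓝 1) := by
    have := (hloga.add hb).const_add 1
    simpa using this
  refine htot.congr' ?_
  filter_upwards [eventually_ge_atTop (2:ℝ)] with s hs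
  have hs0 : (0:ℝ) < s := by linarith
  unfold M
  rw [log_one_div_Phi hs0]
  have hne : s ^ 2 / 2 ≠ 0 := by positivity
  field_simp
  ring

lemma M_eq {s : ℝ} (hs : s ≠ 0) :
    Real.log (1 / stdNormalCDF (-s)) = M s * (s ^ 2 / 2) := by
  unfold M
  field_simp

end TailAux

namespace TailAux

set_option maxHeartbeats 1000000 in
lemma main_ident (a : ℝ) (ha : 1 ≤ a) {s : ℝ} (hs : 2 ≤ s) (hM : 0 < M s) :
    stdNormalCDF (-(a * s)) /
      (stdNormalCDF (-s) ^ (a ^ 2) * Real.log (1 / stdNormalCDF (-s)) ^ ((a ^ 2 - 1) / 2)) =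
    ((4 * Real.pi) ^ ((a ^ 2 - 1) / 2) / a) *
      (R (a * s) * R s ^ (-(a ^ 2)) * M s ^ (-((a ^ 2 - 1) / 2))) := by
  have hs0 : (0:ℝ) < s := by linarith
  have ha0 : (0:ℝ) < a := by linarith
  have has0 : (0:ℝ) < a * s := by positivity
  have hRs := R_pos hs0
  have hRas := R_pos has0
  have hπ : (0:ℝ) < Real.pi := Real.pi_pos
  have h4π : (0:ℝ) < 4 * Real.pi := by positivity
  have hlogpos : 0 < Real.log (1 / stdNormalCDF (-s)) := by
    rw [M_eq hs0.ne']
    exact mul_pos hM (by positivity)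
  have hPhiS := Phi_pos (-s)
  have hPhiAS := Phi_pos (-(a * s))
  have hL : 0 < stdNormalCDF (-(a * s)) /
      (stdNormalCDF (-s) ^ (a ^ 2) * Real.log (1 / stdNormalCDF (-s)) ^ ((a ^ 2 - 1) / 2)) :=
    div_pos hPhiAS (mul_pos (Real.rpow_pos_of_pos hPhiS _) (Real.rpow_pos_of_pos hlogpos _))
  have hRHS : 0 < ((4 * Real.pi) ^ ((a ^ 2 - 1) / 2) / a) *
      (R (a * s) * R s ^ (-(a ^ 2)) * M s ^ (-((a ^ 2 - 1) / 2))) :=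
    mul_pos (div_pos (Real.rpow_pos_of_pos h4π _) ha0)
      (mul_pos (mul_pos hRas (Real.rpow_pos_of_pos hRs _)) (Real.rpow_pos_of_pos hM _))
  rw [← Real.exp_log hL, ← Real.exp_log hRHS]
  congr 1
  rw [Real.log_div hPhiAS.ne'
      (mul_pos (Real.rpow_pos_of_pos hPhiS _) (Real.rpow_pos_of_pos hlogpos _)).ne',
    Real.log_mul (Real.rpow_pos_of_pos hPhiS _).ne' (Real.rpow_pos_of_pos hlogpos _).ne',
    Real.log_rpow hPhiS, Real.log_rpow hlogpos,
    Real.log_mul (div_pos (Real.rpow_pos_of_pos h4π _) ha0).ne'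
      (mul_pos (mul_pos hRas (Real.rpow_pos_of_pos hRs _)) (Real.rpow_pos_of_pos hM _)).ne',
    Real.log_div (Real.rpow_pos_of_pos h4π _).ne' ha0.ne',
    Real.log_rpow h4π,
    Real.log_mul (mul_pos hRas (Real.rpow_pos_of_pos hRs _)).ne'
      (Real.rpow_pos_of_pos hM _).ne',
    Real.log_mul hRas.ne' (Real.rpow_pos_of_pos hRs _).ne',
    Real.log_rpow hRs, Real.log_rpow hM]
  have e1 : Real.log (stdNormalCDF (-(a * s))) = Real.log (R (a * s)) - (a * s) ^ 2 / 2 -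
      (Real.log a + Real.log s) - Real.log (Real.sqrt (2 * Real.pi)) := by
    rw [log_Phi has0, Real.log_mul ha0.ne' hs0.ne']
  have e2 := log_Phi hs0
  have e4 := M_eq hs0.ne'
  rw [e1, e2, e4, Real.log_mul hM.ne' (by positivity : (s ^ 2 / 2 : ℝ) ≠ 0),
    Real.log_div (pow_ne_zero 2 hs0.ne') two_ne_zero, Real.log_pow]
  push_cast
  have c1 : Real.log (Real.sqrt (2 * Real.pi)) = (Real.log 2 + Real.log Real.pi) / 2 := by
    rw [Real.log_sqrt (by positivity), Real.log_mul two_ne_zero hπ.ne']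
  have c2 : Real.log (4 * Real.pi) = 2 * Real.log 2 + Real.log Real.pi := by
    rw [show (4:ℝ) = 2 ^ 2 by norm_num, Real.log_mul (by positivity) hπ.ne', Real.log_pow]
    push_cast; ring
  rw [c1, c2]
  ring

lemma eta_tendsto (a : ℝ) (ha : 1 ≤ a) :
    Tendsto (fun s : ℝ => stdNormalCDF (-(a * s)) /
      (stdNormalCDF (-s) ^ (a ^ 2) * Real.log (1 / stdNormalCDF (-s)) ^ ((a ^ 2 - 1) / 2)))
      atTop (𝓝 ((4 * Real.pi) ^ ((a ^ 2 - 1) / 2) / a)) := by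
  have ha0 : (0:ℝ) < a := by linarith
  have h1 : Tendsto (fun s : ℝ => R (a * s)) atTop (𝓝 1) :=
    R_tendsto.comp (Tendsto.const_mul_atTop ha0 tendsto_id)
  have h2 : Tendsto (fun s : ℝ => R s ^ (-(a ^ 2))) atTop (𝓝 1) := by
    have := R_tendsto.rpow_const (p := -(a ^ 2)) (Or.inl one_ne_zero)
    simpa using this
  have h3 : Tendsto (fun s : ℝ => M s ^ (-((a ^ 2 - 1) / 2))) atTop (𝓝 1) := by
    have := M_tendsto.rpow_const (p := -((a ^ 2 - 1) / 2)) (Or.inl one_ne_zero)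
    simpa using this
  have h4 : Tendsto (fun s : ℝ => ((4 * Real.pi) ^ ((a ^ 2 - 1) / 2) / a) *
      (R (a * s) * R s ^ (-(a ^ 2)) * M s ^ (-((a ^ 2 - 1) / 2)))) atTop
      (𝓝 ((4 * Real.pi) ^ ((a ^ 2 - 1) / 2) / a)) := by
    have := ((h1.mul h2).mul h3).const_mul ((4 * Real.pi) ^ ((a ^ 2 - 1) / 2) / a)
    simpa using this
  refine Tendsto.congr' ?_ h4
  filter_upwards [eventually_ge_atTop (2:ℝ),
    M_tendsto.eventually (eventually_gt_nhds one_pos)] with s hs hMs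
  exact (main_ident a ha hs hMs).symm

end TailAux


/-- Tail transfer: for fixed `a ≥ 1`,
`Φ(aΦ⁻¹(u)) / (u^{a²}(log(1/u))^{(a²-1)/2}) → (4π)^{(a²-1)/2}/a` as `u → 0⁺`,
and `Φ(aΦ⁻¹(u)) ≤ C_a u^{a²}(log(1/u))^{(a²-1)/2}` on `(0, 1/2]`. -/
theorem tail_transfer (a : ℝ) (ha : 1 ≤ a) :
    Tendsto (fun u : ℝ =>
        stdNormalCDF (a * stdNormalCDFInv u) /
          (u ^ (a ^ 2) * (Real.log (1 / u)) ^ ((a ^ 2 - 1) / 2)))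
      (nhdsWithin 0 (Set.Ioi 0))
      (nhds ((4 * Real.pi) ^ ((a ^ 2 - 1) / 2) / a)) ∧
    ∃ C : ℝ, ∀ u : ℝ, u ∈ Set.Ioc (0 : ℝ) (1 / 2) →
      stdNormalCDF (a * stdNormalCDFInv u) ≤
        C * (u ^ (a ^ 2) * (Real.log (1 / u)) ^ ((a ^ 2 - 1) / 2)) := by
  have hatBot : Tendsto (fun t : ℝ => stdNormalCDF (a * t) /
      (stdNormalCDF t ^ (a ^ 2) * Real.log (1 / stdNormalCDF t) ^ ((a ^ 2 - 1) / 2)))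
      atBot (𝓝 ((4 * Real.pi) ^ ((a ^ 2 - 1) / 2) / a)) := by
    have h := (TailAux.eta_tendsto a ha).comp tendsto_neg_atBot_atTop
    refine h.congr fun t => ?_
    simp only [Function.comp_apply]
    rw [show -(a * -t) = a * t by ring, neg_neg]
  have h1 : Tendsto (fun u : ℝ =>
      stdNormalCDF (a * stdNormalCDFInv u) /
        (u ^ (a ^ 2) * (Real.log (1 / u)) ^ ((a ^ 2 - 1) / 2)))
      (nhdsWithin 0 (Set.Ioi 0)) (𝓝 ((4 * Real.pi) ^ ((a ^ 2 - 1) / 2) / a)) := by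
    have hcomp := hatBot.comp TailAux.PhiInv_tendsto
    refine hcomp.congr' ?_
    filter_upwards [Ioo_mem_nhdsGT_of_mem ⟨le_refl (0:ℝ), one_pos⟩] with u hu
    simp only [Function.comp_apply]
    rw [TailAux.Phi_inv_eq hu.1 hu.2]
  refine ⟨h1, ?_⟩
  set K := (4 * Real.pi) ^ ((a ^ 2 - 1) / 2) / a with hK
  have hp : 0 ≤ (a ^ 2 - 1) / 2 := by nlinarith
  have hev : ∀ᶠ u in nhdsWithin 0 (Set.Ioi 0),
      stdNormalCDF (a * stdNormalCDFInv u) /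
        (u ^ (a ^ 2) * (Real.log (1 / u)) ^ ((a ^ 2 - 1) / 2)) < K + 1 :=
    h1.eventually (eventually_lt_nhds (lt_add_one K))
  rw [eventually_nhdsWithin_iff] at hev
  obtain ⟨ε, hε, hball⟩ := Metric.eventually_nhds_iff.mp hev
  have hlog2 : (0:ℝ) < Real.log 2 := Real.log_pos one_lt_two
  set D := ε ^ (a ^ 2) * Real.log 2 ^ ((a ^ 2 - 1) / 2) with hD
  have hDpos : 0 < D := mul_pos (Real.rpow_pos_of_pos hε _) (Real.rpow_pos_of_pos hlog2 _)
  refine ⟨max (K + 1) D⁻¹, fun u hu => ?_⟩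
  obtain ⟨hu0, hu2⟩ := hu
  have hlogu : Real.log 2 ≤ Real.log (1 / u) := by
    apply Real.log_le_log two_pos
    rw [le_div_iff₀ hu0]
    linarith
  have hdenpos : 0 < u ^ (a ^ 2) * Real.log (1 / u) ^ ((a ^ 2 - 1) / 2) :=
    mul_pos (Real.rpow_pos_of_pos hu0 _) (Real.rpow_pos_of_pos (lt_of_lt_of_le hlog2 hlogu) _)
  rcases lt_or_ge u ε with hcase | hcase
  · have hlt := hball (by rw [Real.dist_eq, sub_zero, abs_of_pos hu0]; exact hcase) hu0
    have hnum := (div_lt_iff₀ hdenpos).mp hlt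
    calc stdNormalCDF (a * stdNormalCDFInv u)
        ≤ (K + 1) * (u ^ (a ^ 2) * (Real.log (1 / u)) ^ ((a ^ 2 - 1) / 2)) := hnum.le
      _ ≤ max (K + 1) D⁻¹ * (u ^ (a ^ 2) * (Real.log (1 / u)) ^ ((a ^ 2 - 1) / 2)) :=
          mul_le_mul_of_nonneg_right (le_max_left _ _) hdenpos.le
  · have hub : stdNormalCDF (a * stdNormalCDFInv u) ≤ 1 := (TailAux.Phi_lt_one _).le
    have hden_ge : D ≤ u ^ (a ^ 2) * Real.log (1 / u) ^ ((a ^ 2 - 1) / 2) := by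
      apply mul_le_mul (Real.rpow_le_rpow hε.le hcase (by positivity))
        (Real.rpow_le_rpow hlog2.le hlogu hp) (by positivity)
        (Real.rpow_nonneg hu0.le _)
    calc stdNormalCDF (a * stdNormalCDFInv u) ≤ 1 := hub
      _ = D⁻¹ * D := (inv_mul_cancel₀ hDpos.ne').symm
      _ ≤ D⁻¹ * (u ^ (a ^ 2) * (Real.log (1 / u)) ^ ((a ^ 2 - 1) / 2)) :=
          mul_le_mul_of_nonneg_left hden_ge (inv_nonneg.mpr hDpos.le)
      _ ≤ max (K + 1) D⁻¹ * (u ^ (a ^ 2) * (Real.log (1 / u)) ^ ((a ^ 2 - 1) / 2)) :=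
          mul_le_mul_of_nonneg_right (le_max_right _ _) hdenpos.le
end

section
/- Define Ψ(u) := Φ(√2·Φ⁻¹(u)) for u ∈ (0,1). Then lim_{u→0⁺} Ψ(u) / ( u² √(log(1/u)) ) = √(2π). Moreover there is a constant C < ∞ such that Ψ(u) ≤ C · u² √(log(1/u)) for all u ∈ (0, 1/2]. -/
open Filter Set

/-- The GOE off-diagonal tail-transfer function `Ψ(u) = Φ(√2·Φ⁻¹(u))`. -/
noncomputable def PsiGOE (u : ℝ) : ℝ :=
  stdNormalCDF (Real.sqrt 2 * stdNormalCDFInv u)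

open MeasureTheory Real

noncomputable def Qg (t : ℝ) : ℝ := ∫ z in Set.Ioi t, Real.exp (-z ^ 2 / 2)

lemma integrable_gauss : Integrable (fun z : ℝ => Real.exp (-z ^ 2 / 2)) := by
  have := integrable_exp_neg_mul_sq (by norm_num : (0:ℝ) < 1/2)
  refine this.congr (Eventually.of_forall fun x => by ring_nf)

lemma integral_gauss : ∫ z : ℝ, Real.exp (-z ^ 2 / 2) = Real.sqrt (2 * Real.pi) := by
  have := integral_gaussian (1/2)
  rw [show Real.pi / (1/2) = 2 * Real.pi by ring] at this
  rw [← this]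
  congr 1; ext x; ring_nf

lemma Qg_pos (t : ℝ) : 0 < Qg t := by
  rw [Qg, setIntegral_pos_iff_support_of_nonneg_ae]
  · have : (Function.support fun z : ℝ => Real.exp (-z ^ 2 / 2)) = Set.univ := by
      ext x; simp [Function.support, Real.exp_ne_zero]
    rw [this, Set.univ_inter]
    simp [Real.volume_Ioi]
  · exact Eventually.of_forall fun x => (Real.exp_pos _).le
  · exact integrable_gauss.integrableOn

lemma gauss_symm (t : ℝ) : ∫ z in Set.Iic (-t), Real.exp (-z ^ 2 / 2) = Qg t := by
  have := integral_comp_neg_Iic (-t) (fun z => Real.exp (-z ^ 2 / 2))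
  simp only [neg_neg] at this
  rw [Qg, ← this]
  congr 1; ext x; ring_nf

lemma gauss_split (t : ℝ) :
    (∫ z in Set.Iic t, Real.exp (-z ^ 2 / 2)) + Qg t = Real.sqrt (2 * Real.pi) := by
  rw [Qg, intervalIntegral.integral_Iic_add_Ioi integrable_gauss.integrableOn integrable_gauss.integrableOn,
    integral_gauss]

lemma integral_mul_gauss {t : ℝ} :
    ∫ z in Set.Ioi t, z * Real.exp (-z ^ 2 / 2) = Real.exp (-t ^ 2 / 2) := by
  have hd : ∀ x ∈ Set.Ici t, HasDerivAt (fun z : ℝ => -Real.exp (-z ^ 2 / 2))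
      (x * Real.exp (-x ^ 2 / 2)) x := by
    intro x _
    have h1 : HasDerivAt (fun z : ℝ => -z ^ 2 / 2) (-x) x := by
      have := ((hasDerivAt_pow 2 x).neg).div_const 2
      exact this.congr_deriv (by push_cast; ring)
    have := (h1.exp).neg
    exact this.congr_deriv (by ring)
  have hint : IntegrableOn (fun z : ℝ => z * Real.exp (-z ^ 2 / 2)) (Set.Ioi t) := by
    have := integrable_mul_exp_neg_mul_sq (by norm_num : (0:ℝ) < 1/2)
    refine (this.congr (Eventually.of_forall fun x => by ring_nf)).integrableOn
  have hlim : Tendsto (fun z : ℝ => -Real.exp (-z ^ 2 / 2)) atTop (nhds 0) := by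
    rw [← neg_zero]
    refine Tendsto.neg (Real.tendsto_exp_atBot.comp ?_)
    have : Tendsto (fun z : ℝ => z ^ 2 / 2) atTop atTop :=
      (tendsto_pow_atTop (by norm_num)).atTop_div_const (by norm_num)
    have h2 : Tendsto (fun z : ℝ => -(z ^ 2 / 2)) atTop atBot :=
      tendsto_neg_atTop_atBot.comp this
    refine h2.congr fun z => by ring
  have := MeasureTheory.integral_Ioi_of_hasDerivAt_of_tendsto' hd hint hlim
  rw [this]; ring

lemma gauss_tendsto_zero : Tendsto (fun z : ℝ => Real.exp (-z ^ 2 / 2)) atTop (nhds 0) := by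
  refine Real.tendsto_exp_atBot.comp ?_
  have : Tendsto (fun z : ℝ => z ^ 2 / 2) atTop atTop :=
    (tendsto_pow_atTop (by norm_num)).atTop_div_const (by norm_num)
  have h2 : Tendsto (fun z : ℝ => -(z ^ 2 / 2)) atTop atBot :=
    tendsto_neg_atTop_atBot.comp this
  refine h2.congr fun z => by ring

lemma Qg_upper {t : ℝ} (ht : 0 < t) : Qg t ≤ Real.exp (-t ^ 2 / 2) / t := by
  have h1 : Qg t ≤ ∫ z in Set.Ioi t, (z / t) * Real.exp (-z ^ 2 / 2) := by
    rw [Qg]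
    refine setIntegral_mono_on integrable_gauss.integrableOn ?_ measurableSet_Ioi ?_
    · have := integrable_mul_exp_neg_mul_sq (by norm_num : (0:ℝ) < 1/2)
      have h2 : Integrable (fun z : ℝ => z * Real.exp (-z ^ 2 / 2)) :=
        this.congr (Eventually.of_forall fun x => by ring_nf)
      exact (h2.div_const t).congr (Eventually.of_forall fun x => by ring) |>.integrableOn
    · intro x hx
      have hx1 : 1 ≤ x / t := (one_le_div ht).2 (le_of_lt hx)
      nth_rewrite 1 [← one_mul (Real.exp (-x ^ 2 / 2))]
      exact mul_le_mul_of_nonneg_right hx1 (Real.exp_pos _).le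
  have h2 : ∫ z in Set.Ioi t, (z / t) * Real.exp (-z ^ 2 / 2)
      = Real.exp (-t ^ 2 / 2) / t := by
    have : ∀ z : ℝ, (z / t) * Real.exp (-z ^ 2 / 2) = (z * Real.exp (-z ^ 2 / 2)) / t := by
      intro z; ring
    simp_rw [this, integral_div, integral_mul_gauss]
  linarith

lemma Qg_lower {t : ℝ} (ht : 0 < t) :
    (1 / t - 1 / t ^ 3) * Real.exp (-t ^ 2 / 2) ≤ Qg t := by
  have hint : IntegrableOn (fun z : ℝ => (1 - 3 / z ^ 4) * Real.exp (-z ^ 2 / 2))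
      (Set.Ioi t) := by
    refine Integrable.mono' ((integrable_gauss.const_mul (1 + 3 / t ^ 4)).integrableOn) ?_ ?_
    · refine ContinuousOn.aestronglyMeasurable ?_ measurableSet_Ioi
      refine ContinuousOn.mul ?_ (Continuous.continuousOn (Real.continuous_exp.comp (by fun_prop)))
      refine ContinuousOn.sub continuousOn_const ?_
      refine ContinuousOn.div continuousOn_const (Continuous.continuousOn (by fun_prop)) ?_
      intro x hx
      exact pow_ne_zero 4 (lt_trans ht hx).ne'
    · refine (ae_restrict_iff' measurableSet_Ioi).2 (Eventually.of_forall fun x hx => ?_)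
      have hx0 : 0 < x := lt_trans ht hx
      rw [norm_mul, Real.norm_eq_abs, Real.norm_eq_abs, abs_of_pos (Real.exp_pos _)]
      refine mul_le_mul_of_nonneg_right ?_ (Real.exp_pos _).le
      rw [abs_le]
      constructor
      · have h4 : 3 / x ^ 4 ≤ 3 / t ^ 4 := by
          apply div_le_div_of_nonneg_left (by norm_num) (by positivity)
          exact pow_le_pow_left₀ ht.le (le_of_lt hx) 4
        nlinarith
      · have h4 : 0 ≤ 3 / x ^ 4 := by positivity
        have h5 : 0 ≤ 3 / t ^ 4 := by positivity
        nlinarith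
  have key : ∫ z in Set.Ioi t, (1 - 3 / z ^ 4) * Real.exp (-z ^ 2 / 2)
      = (1 / t - 1 / t ^ 3) * Real.exp (-t ^ 2 / 2) := by
    have hd : ∀ x ∈ Set.Ici t, HasDerivAt
        (fun z : ℝ => -((1 / z - 1 / z ^ 3) * Real.exp (-z ^ 2 / 2)))
        ((1 - 3 / x ^ 4) * Real.exp (-x ^ 2 / 2)) x := by
      intro x hx
      have hx0 : x ≠ 0 := (lt_of_lt_of_le ht hx).ne'
      have he : HasDerivAt (fun z : ℝ => Real.exp (-z ^ 2 / 2))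
          (-x * Real.exp (-x ^ 2 / 2)) x := by
        have h1 : HasDerivAt (fun z : ℝ => -z ^ 2 / 2) (-x) x := by
          have := ((hasDerivAt_pow 2 x).neg).div_const 2
          exact this.congr_deriv (by push_cast; ring)
        have := h1.exp
        convert this using 1; ring
      have hp : HasDerivAt (fun z : ℝ => 1 / z - 1 / z ^ 3)
          (-1 / x ^ 2 + 3 / x ^ 4) x := by
        have h1 : HasDerivAt (fun z : ℝ => 1 / z) (-1 / x ^ 2) x := by
          have := hasDerivAt_inv hx0
          simp only [one_div]
          exact this.congr_deriv (by ring)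
        have h2 : HasDerivAt (fun z : ℝ => 1 / z ^ 3) (-3 / x ^ 4) x := by
          have h3 := (hasDerivAt_pow 3 x).inv (pow_ne_zero 3 hx0)
          have : -(↑3 * x ^ (3 - 1)) / (x ^ 3) ^ 2 = -3 / x ^ 4 := by
            field_simp
          simpa [one_div, this, Pi.inv_def] using h3
        have := h1.sub h2
        exact this.congr_deriv (by ring)
      have := (hp.mul he).neg
      refine this.congr_deriv ?_
      field_simp
      ring
    have hlim : Tendsto (fun z : ℝ => -((1 / z - 1 / z ^ 3) * Real.exp (-z ^ 2 / 2)))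
        atTop (nhds 0) := by
      have h1 : Tendsto (fun z : ℝ => 1 / z - 1 / z ^ 3) atTop (nhds 0) := by
        have ha : Tendsto (fun z : ℝ => 1 / z) atTop (nhds 0) := by
          simpa [one_div] using tendsto_inv_atTop_zero
        have hb : Tendsto (fun z : ℝ => 1 / z ^ 3) atTop (nhds 0) := by
          have h3 : Tendsto (fun z : ℝ => z ^ 3) atTop atTop :=
            tendsto_pow_atTop (by norm_num : (3:ℕ) ≠ 0)
          have h4 : Tendsto (fun r : ℝ => r⁻¹) atTop (nhds 0) := tendsto_inv_atTop_zero
          have := h4.comp h3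
          simpa [one_div, Function.comp_def] using this
        simpa using ha.sub hb
      have := (h1.mul gauss_tendsto_zero).neg
      simpa using this
    have := MeasureTheory.integral_Ioi_of_hasDerivAt_of_tendsto' hd hint hlim
    rw [this]; ring
  rw [← key, Qg]
  refine setIntegral_mono_on hint integrable_gauss.integrableOn measurableSet_Ioi ?_
  intro x hx
  nth_rewrite 2 [← one_mul (Real.exp (-x ^ 2 / 2))]
  refine mul_le_mul_of_nonneg_right ?_ (Real.exp_pos _).le
  have : 0 ≤ 3 / x ^ 4 := by positivity
  linarith

lemma sqrt_two_pi_pos : 0 < Real.sqrt (2 * Real.pi) :=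
  Real.sqrt_pos.2 (by positivity)

lemma one_le_sqrt_two_pi : 1 ≤ Real.sqrt (2 * Real.pi) := by
  rw [show (1:ℝ) = Real.sqrt 1 by simp]
  exact Real.sqrt_le_sqrt (by nlinarith [Real.pi_gt_three])

lemma cdf_eq (t : ℝ) :
    stdNormalCDF t = (∫ z in Set.Iic t, Real.exp (-z ^ 2 / 2)) / Real.sqrt (2 * Real.pi) := by
  rw [stdNormalCDF, integral_div]

lemma cdf_eq_Qg (t : ℝ) : stdNormalCDF t = Qg (-t) / Real.sqrt (2 * Real.pi) := by
  rw [cdf_eq, ← gauss_symm, neg_neg]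

lemma cdf_neg (t : ℝ) : stdNormalCDF (-t) = Qg t / Real.sqrt (2 * Real.pi) := by
  rw [cdf_eq_Qg, neg_neg]

lemma cdf_pos (t : ℝ) : 0 < stdNormalCDF t := by
  rw [cdf_eq_Qg]; exact div_pos (Qg_pos _) sqrt_two_pi_pos

lemma cdf_add_one (t : ℝ) : stdNormalCDF t + stdNormalCDF (-t) = 1 := by
  rw [cdf_eq, cdf_neg, ← add_div, gauss_split t, div_self sqrt_two_pi_pos.ne']

lemma cdf_lt_one (t : ℝ) : stdNormalCDF t < 1 := by
  have := cdf_add_one t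
  have := cdf_pos (-t)
  linarith

lemma cdf_strictMono : StrictMono stdNormalCDF := by
  intro s t hst
  rw [cdf_eq, cdf_eq, div_lt_div_iff_of_pos_right sqrt_two_pi_pos]
  have h := intervalIntegral.integral_Iic_sub_Iic (μ := volume)
    integrable_gauss.integrableOn integrable_gauss.integrableOn (a := s) (b := t)
  rw [intervalIntegral.integral_of_le hst.le] at h
  have hpos : 0 < ∫ z in Set.Ioc s t, Real.exp (-z ^ 2 / 2) := by
    rw [← intervalIntegral.integral_of_le hst.le]
    refine intervalIntegral.intervalIntegral_pos_of_pos_on ?_ (fun x _ => Real.exp_pos _) hst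
    exact integrable_gauss.intervalIntegrable
  linarith

lemma cdf_lipschitz (s t : ℝ) : |stdNormalCDF t - stdNormalCDF s| ≤ |t - s| := by
  wlog hst : s ≤ t with H
  · rw [abs_sub_comm, abs_sub_comm t s]; exact H t s (le_of_not_ge hst)
  rw [cdf_eq, cdf_eq, div_sub_div_same]
  have h := intervalIntegral.integral_Iic_sub_Iic (μ := volume)
    integrable_gauss.integrableOn integrable_gauss.integrableOn (a := s) (b := t)
  rw [intervalIntegral.integral_of_le hst] at h
  rw [h]
  have hb : |∫ z in Set.Ioc s t, Real.exp (-z ^ 2 / 2)| ≤ (t - s) := by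
    have := MeasureTheory.norm_setIntegral_le_of_norm_le_const (μ := volume)
      (s := Set.Ioc s t) (f := fun z => Real.exp (-z ^ 2 / 2)) (C := 1)
      (by rw [Real.volume_Ioc]; exact ENNReal.ofReal_lt_top)
      (fun x _ => by
        rw [Real.norm_eq_abs, abs_of_pos (Real.exp_pos _)]
        exact Real.exp_le_one_iff.2 (by nlinarith [sq_nonneg x]))
    · rw [Real.norm_eq_abs] at this
      calc |∫ z in Set.Ioc s t, Real.exp (-z ^ 2 / 2)|
          ≤ 1 * (volume (Set.Ioc s t)).toReal := this
        _ = t - s := by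
            rw [one_mul, Real.volume_Ioc, ENNReal.toReal_ofReal (by linarith)]
  rw [abs_div, abs_of_pos sqrt_two_pi_pos]
  calc |∫ z in Set.Ioc s t, Real.exp (-z ^ 2 / 2)| / Real.sqrt (2 * Real.pi)
      ≤ (t - s) / Real.sqrt (2 * Real.pi) := by
        exact div_le_div_of_nonneg_right hb sqrt_two_pi_pos.le
    _ ≤ (t - s) := by
        rw [div_le_iff₀ sqrt_two_pi_pos]
        nlinarith [one_le_sqrt_two_pi, abs_nonneg (∫ z in Set.Ioc s t, Real.exp (-z ^ 2 / 2)), hb]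
    _ ≤ |t - s| := le_abs_self _

lemma cdf_continuous : Continuous stdNormalCDF := by
  refine LipschitzWith.continuous (K := 1) ?_
  refine LipschitzWith.of_dist_le_mul fun x y => ?_
  rw [Real.dist_eq, Real.dist_eq, NNReal.coe_one, one_mul]
  exact cdf_lipschitz y x

lemma cdf_bound_neg {t : ℝ} (ht : 1 ≤ t) : stdNormalCDF (-t) ≤ 1 / t := by
  have ht0 : 0 < t := lt_of_lt_of_le one_pos ht
  rw [cdf_neg]
  have h1 : Qg t ≤ 1 / t := by
    refine le_trans (Qg_upper ht0) ?_
    apply div_le_div_of_nonneg_right _ ht0.le |>.trans_eq rfl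
    exact Real.exp_le_one_iff.2 (by nlinarith [sq_nonneg t])
  calc Qg t / Real.sqrt (2 * Real.pi) ≤ Qg t / 1 :=
        div_le_div_of_nonneg_left (Qg_pos t).le one_pos one_le_sqrt_two_pi
    _ = Qg t := div_one _
    _ ≤ 1 / t := h1

lemma cdf_surj {u : ℝ} (hu : u ∈ Set.Ioo (0:ℝ) 1) : ∃ x, stdNormalCDF x = u := by
  obtain ⟨hu0, hu1⟩ := hu
  set a : ℝ := -(1 + 1/u) with ha
  set b : ℝ := 1 + 1/(1-u) with hb
  have hu1' : 0 < 1 - u := by linarith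
  have haa : stdNormalCDF a ≤ u := by
    have h1 : (1:ℝ) ≤ 1 + 1/u := by
      have : 0 < 1/u := by positivity
      linarith
    refine le_trans (cdf_bound_neg h1) ?_
    rw [div_le_iff₀ (by positivity)]
    have : 1/u > 0 := by positivity
    rw [mul_add, mul_one, mul_one_div, div_self hu0.ne']
    linarith
  have hbb : u ≤ stdNormalCDF b := by
    have h1 : (1:ℝ) ≤ 1 + 1/(1-u) := by
      have : 0 < 1/(1-u) := by positivity
      linarith
    have h2 := cdf_bound_neg h1
    have h3 := cdf_add_one b
    have h4 : 1 / (1 + 1/(1-u)) ≤ 1 - u := by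
      rw [div_le_iff₀ (by positivity)]
      have : (1-u) * (1 + 1/(1-u)) = 1 - u + 1 := by
        field_simp
      nlinarith
    have : stdNormalCDF (-b) ≤ 1 - u := le_trans h2 h4
    linarith
  have hab : a ≤ b := by
    have : 0 < 1/u := by positivity
    have : 0 < 1/(1-u) := by positivity
    simp only [ha, hb]; linarith
  have := intermediate_value_Icc hab cdf_continuous.continuousOn
  obtain ⟨x, _, hx⟩ := this ⟨haa, hbb⟩
  exact ⟨x, hx⟩

lemma cdf_inv_spec {u : ℝ} (hu : u ∈ Set.Ioo (0:ℝ) 1) :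
    stdNormalCDF (stdNormalCDFInv u) = u :=
  Function.invFun_eq (cdf_surj hu)

/-- The normalized tail `B t = Qg t · t · exp(t²/2)`. -/
noncomputable def Bg (t : ℝ) : ℝ := Qg t * t * Real.exp (t ^ 2 / 2)

lemma Bg_le_one {t : ℝ} (ht : 0 < t) : Bg t ≤ 1 := by
  have := Qg_upper ht
  have h2 : Qg t * t ≤ Real.exp (-t ^ 2 / 2) := by
    rw [div_eq_mul_inv] at this
    calc Qg t * t ≤ (Real.exp (-t ^ 2 / 2) * t⁻¹) * t :=
          mul_le_mul_of_nonneg_right this ht.le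
      _ = Real.exp (-t ^ 2 / 2) := by field_simp
  calc Bg t = Qg t * t * Real.exp (t ^ 2 / 2) := rfl
    _ ≤ Real.exp (-t ^ 2 / 2) * Real.exp (t ^ 2 / 2) :=
        mul_le_mul_of_nonneg_right h2 (Real.exp_pos _).le
    _ = 1 := by
        rw [← Real.exp_add, show -t ^ 2 / 2 + t ^ 2 / 2 = 0 by ring, Real.exp_zero]

lemma one_sub_le_Bg {t : ℝ} (ht : 0 < t) : 1 - 1 / t ^ 2 ≤ Bg t := by
  have h1 := Qg_lower ht
  have h2 : (1 / t - 1 / t ^ 3) * Real.exp (-t ^ 2 / 2) * t * Real.exp (t ^ 2 / 2)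
      = 1 - 1 / t ^ 2 := by
    rw [show (1 / t - 1 / t ^ 3) * Real.exp (-t ^ 2 / 2) * t * Real.exp (t ^ 2 / 2)
        = (1 / t - 1 / t ^ 3) * t * (Real.exp (-t ^ 2 / 2) * Real.exp (t ^ 2 / 2)) by ring,
      ← Real.exp_add]
    have : -t ^ 2 / 2 + t ^ 2 / 2 = 0 := by ring
    rw [this, Real.exp_zero, mul_one]
    field_simp
  rw [← h2, Bg]
  have := mul_le_mul_of_nonneg_right (mul_le_mul_of_nonneg_right h1 ht.le)
    (Real.exp_pos (t ^ 2 / 2)).le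
  linarith

lemma Bg_tendsto : Tendsto Bg atTop (nhds 1) := by
  have hlow : Tendsto (fun t : ℝ => 1 - 1 / t ^ 2) atTop (nhds 1) := by
    have h3 : Tendsto (fun z : ℝ => z ^ 2) atTop atTop :=
      tendsto_pow_atTop (by norm_num : (2:ℕ) ≠ 0)
    have h4 : Tendsto (fun r : ℝ => r⁻¹) atTop (nhds 0) := tendsto_inv_atTop_zero
    have h5 := h4.comp h3
    have h6 : Tendsto (fun t : ℝ => 1 / t ^ 2) atTop (nhds 0) := by
      simpa [one_div, Function.comp_def] using h5
    simpa using (tendsto_const_nhds (x := (1:ℝ)) (f := atTop)).sub h6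
  refine tendsto_of_tendsto_of_tendsto_of_le_of_le' hlow tendsto_const_nhds ?_ ?_
  · filter_upwards [eventually_gt_atTop (0:ℝ)] with t ht using one_sub_le_Bg ht
  · filter_upwards [eventually_gt_atTop (0:ℝ)] with t ht using Bg_le_one ht

lemma Qg_lower' {t : ℝ} (ht : Real.sqrt 2 ≤ t) :
    Real.exp (-t ^ 2 / 2) / (2 * t) ≤ Qg t := by
  have ht0 : 0 < t := lt_of_lt_of_le (Real.sqrt_pos.2 two_pos) ht
  refine le_trans ?_ (Qg_lower ht0)
  have h2 : 2 ≤ t ^ 2 := by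
    calc (2:ℝ) = Real.sqrt 2 ^ 2 := (Real.sq_sqrt two_pos.le).symm
      _ ≤ t ^ 2 := by nlinarith [Real.sqrt_nonneg 2]
  have h3 : 1 / t ^ 2 ≤ 1 / 2 := by
    rw [div_le_div_iff₀ (by positivity) two_pos]; linarith
  have h4 : 1 / (2 * t) ≤ 1 / t - 1 / t ^ 3 := by
    have : 1 / t - 1 / t ^ 3 = (1 / t) * (1 - 1 / t ^ 2) := by field_simp
    rw [this, show 1 / (2*t) = (1/t) * (1/2) by field_simp]
    refine mul_le_mul_of_nonneg_left (by linarith) (by positivity)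
  calc Real.exp (-t ^ 2 / 2) / (2 * t) = 1 / (2 * t) * Real.exp (-t ^ 2 / 2) := by ring
    _ ≤ (1 / t - 1 / t ^ 3) * Real.exp (-t ^ 2 / 2) :=
        mul_le_mul_of_nonneg_right h4 (Real.exp_pos _).le

lemma log_div_sq_tendsto : Tendsto (fun t : ℝ => Real.log t / (t ^ 2 / 2)) atTop (nhds 0) := by
  have h1 : Tendsto (fun t : ℝ => Real.log t / t) atTop (nhds 0) :=
    Real.isLittleO_log_id_atTop.tendsto_div_nhds_zero
  have h2 : Tendsto (fun t : ℝ => 2 / t) atTop (nhds 0) := by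
    have h4 : Tendsto (fun r : ℝ => r⁻¹) atTop (nhds 0) := tendsto_inv_atTop_zero
    simpa [div_eq_mul_inv] using h4.const_mul 2
  have := h1.mul h2
  rw [mul_zero] at this
  refine this.congr' ?_
  filter_upwards [eventually_gt_atTop (0:ℝ)] with t ht
  rw [div_mul_div_comm, div_eq_div_iff (by positivity) (by positivity)]
  ring

/-- `c t = log(√(2π)/Qg t) / (t²/2)`. -/
noncomputable def Cg (t : ℝ) : ℝ := Real.log (Real.sqrt (2 * Real.pi) / Qg t) / (t ^ 2 / 2)

lemma Qg_lt_sqrt_two_pi {t : ℝ} (ht : 1 ≤ t) : Qg t < Real.sqrt (2 * Real.pi) := by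
  have ht0 : 0 < t := lt_of_lt_of_le one_pos ht
  have h1 : Qg t < 1 := by
    refine lt_of_le_of_lt (Qg_upper ht0) ?_
    rw [div_lt_one ht0]
    calc Real.exp (-t ^ 2 / 2) < 1 := by
          rw [Real.exp_lt_one_iff]; nlinarith
      _ ≤ t := ht
  exact lt_of_lt_of_le h1 one_le_sqrt_two_pi

lemma Cg_tendsto : Tendsto Cg atTop (nhds 1) := by
  have hup : Tendsto (fun t : ℝ => 1 + (Real.log (Real.sqrt (2 * Real.pi))
      + (Real.log 2 + Real.log t)) / (t ^ 2 / 2)) atTop (nhds 1) := by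
    have h1 : Tendsto (fun t : ℝ => (Real.log (Real.sqrt (2 * Real.pi)) + Real.log 2)
        / (t ^ 2 / 2)) atTop (nhds 0) := by
      have h3 : Tendsto (fun z : ℝ => z ^ 2 / 2) atTop atTop :=
        (tendsto_pow_atTop (by norm_num : (2:ℕ) ≠ 0)).atTop_div_const two_pos
      exact tendsto_const_nhds.div_atTop h3
    have h2 := h1.add log_div_sq_tendsto
    rw [add_zero] at h2
    have h4 := (tendsto_const_nhds (x := (1:ℝ)) (f := atTop)).add h2
    rw [add_zero] at h4
    refine h4.congr fun t => by rw [← add_div]; ring_nf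
  have hlo : Tendsto (fun t : ℝ => 1 + (Real.log (Real.sqrt (2 * Real.pi))
      + Real.log t) / (t ^ 2 / 2)) atTop (nhds 1) := by
    have h1 : Tendsto (fun t : ℝ => Real.log (Real.sqrt (2 * Real.pi))
        / (t ^ 2 / 2)) atTop (nhds 0) := by
      have h3 : Tendsto (fun z : ℝ => z ^ 2 / 2) atTop atTop :=
        (tendsto_pow_atTop (by norm_num : (2:ℕ) ≠ 0)).atTop_div_const two_pos
      exact tendsto_const_nhds.div_atTop h3
    have h2 := h1.add log_div_sq_tendsto
    rw [add_zero] at h2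
    have h4 := (tendsto_const_nhds (x := (1:ℝ)) (f := atTop)).add h2
    rw [add_zero] at h4
    refine h4.congr fun t => by rw [← add_div]
  refine tendsto_of_tendsto_of_tendsto_of_le_of_le' hlo hup ?_ ?_
  · filter_upwards [eventually_ge_atTop (2:ℝ)] with t ht
    have ht1 : (1:ℝ) ≤ t := by linarith
    have ht0 : 0 < t := by linarith
    have hQpos := Qg_pos t
    have hlogQ : Real.log (Qg t) ≤ -t ^ 2 / 2 - Real.log t := by
      calc Real.log (Qg t) ≤ Real.log (Real.exp (-t ^ 2 / 2) / t) :=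
            Real.log_le_log hQpos (Qg_upper ht0)
        _ = -t ^ 2 / 2 - Real.log t := by
            rw [Real.log_div (Real.exp_pos _).ne' ht0.ne', Real.log_exp]
    rw [Cg, Real.log_div sqrt_two_pi_pos.ne' hQpos.ne']
    have hD : 0 < t ^ 2 / 2 := by positivity
    rw [le_div_iff₀ hD, add_mul, one_mul, div_mul_cancel₀ _ hD.ne']
    linarith
  · filter_upwards [eventually_ge_atTop (2:ℝ)] with t ht
    have ht0 : 0 < t := by linarith
    have hsqrt2 : Real.sqrt 2 ≤ t := by
      have h1 : Real.sqrt 2 ≤ Real.sqrt 4 := Real.sqrt_le_sqrt (by norm_num)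
      have h2 : Real.sqrt 4 = 2 := by
        rw [show (4:ℝ) = 2^2 by norm_num, Real.sqrt_sq two_pos.le]
      linarith
    have hQpos := Qg_pos t
    have hlogQ : -t ^ 2 / 2 - (Real.log 2 + Real.log t) ≤ Real.log (Qg t) := by
      calc -t ^ 2 / 2 - (Real.log 2 + Real.log t)
          = Real.log (Real.exp (-t ^ 2 / 2) / (2 * t)) := by
            rw [Real.log_div (Real.exp_pos _).ne' (by positivity), Real.log_exp,
              Real.log_mul two_ne_zero ht0.ne']
        _ ≤ Real.log (Qg t) := Real.log_le_log (by positivity) (Qg_lower' hsqrt2)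
    rw [Cg, Real.log_div sqrt_two_pi_pos.ne' hQpos.ne']
    have hD : 0 < t ^ 2 / 2 := by positivity
    rw [div_le_iff₀ hD, add_mul, one_mul, div_mul_cancel₀ _ hD.ne']
    linarith

/-- The ratio function in terms of `t`. -/
noncomputable def Rg (t : ℝ) : ℝ :=
  Qg (Real.sqrt 2 * t) * Real.sqrt (2 * Real.pi) /
    ((Qg t) ^ 2 * Real.sqrt (Real.log (Real.sqrt (2 * Real.pi) / Qg t)))

lemma Rg_eq {t : ℝ} (ht : 2 ≤ t) :
    Rg t = Real.sqrt (2 * Real.pi) * Bg (Real.sqrt 2 * t) /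
      ((Bg t) ^ 2 * Real.sqrt (Cg t)) := by
  have ht0 : 0 < t := by linarith
  have hQ := Qg_pos t
  have hQ2 := Qg_pos (Real.sqrt 2 * t)
  have hlogpos : 0 < Real.log (Real.sqrt (2 * Real.pi) / Qg t) :=
    Real.log_pos ((one_lt_div hQ).2 (Qg_lt_sqrt_two_pi (by linarith)))
  have hL := Real.sqrt_pos.2 hlogpos
  have hCt : Real.sqrt (Cg t)
      = Real.sqrt (Real.log (Real.sqrt (2 * Real.pi) / Qg t)) * Real.sqrt 2 / t := by
    rw [Cg, Real.sqrt_div hlogpos.le, Real.sqrt_div (sq_nonneg t), Real.sqrt_sq ht0.le]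
    field_simp
  have hE : Real.exp (-(Real.sqrt 2 * t) ^ 2 / 2) = Real.exp (-t ^ 2) := by
    congr 1
    rw [mul_pow, Real.sq_sqrt two_pos.le]
    ring
  have hE2 : (Real.sqrt 2 * t) ^ 2 / 2 = t ^ 2 := by
    rw [mul_pow, Real.sq_sqrt two_pos.le]; ring
  have hEE : Real.exp (t ^ 2 / 2) ^ 2 = Real.exp (t ^ 2) := by
    rw [sq, ← Real.exp_add]; congr 1; ring
  rw [Rg, Bg, Bg, hCt, hE2]
  rw [div_eq_div_iff (by positivity) (by positivity)]
  have h2 : Real.sqrt 2 ≠ 0 := (Real.sqrt_pos.2 two_pos).ne'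
  field_simp
  ring_nf
  rw [← hEE]
  ring

lemma Rg_tendsto : Tendsto Rg atTop (nhds (Real.sqrt (2 * Real.pi))) := by
  have hmul : Tendsto (fun t : ℝ => Real.sqrt 2 * t) atTop atTop := by
    have := Tendsto.const_mul_atTop (Real.sqrt_pos.2 two_pos) (tendsto_id (x := atTop (α := ℝ)))
    simpa using this
  have hA : Tendsto (fun t : ℝ => Bg (Real.sqrt 2 * t)) atTop (nhds 1) :=
    Bg_tendsto.comp hmul
  have hC : Tendsto (fun t : ℝ => Real.sqrt (Cg t)) atTop (nhds 1) := by
    have := (Real.continuous_sqrt.tendsto 1).comp Cg_tendsto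
    simpa [Function.comp_def] using this
  have hmain : Tendsto (fun t : ℝ => Real.sqrt (2 * Real.pi) * Bg (Real.sqrt 2 * t) /
      ((Bg t) ^ 2 * Real.sqrt (Cg t))) atTop (nhds (Real.sqrt (2 * Real.pi))) := by
    have := (tendsto_const_nhds (x := Real.sqrt (2 * Real.pi)) (f := atTop (α := ℝ))).mul hA
      |>.div ((Bg_tendsto.pow 2).mul hC) (by norm_num)
    simpa [Pi.div_def] using this
  refine hmain.congr' ?_
  filter_upwards [eventually_ge_atTop (2:ℝ)] with t ht
  exact (Rg_eq ht).symm

lemma inv_neg_tendsto :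
    Tendsto (fun u : ℝ => -stdNormalCDFInv u) (nhdsWithin 0 (Set.Ioi 0)) atTop := by
  rw [tendsto_atTop]
  intro M
  have hM : 0 < stdNormalCDF (-M) := cdf_pos _
  have hM1 : stdNormalCDF (-M) < 1 := cdf_lt_one _
  have hmem : Set.Ioo (0:ℝ) (stdNormalCDF (-M)) ∈ nhdsWithin (0:ℝ) (Set.Ioi 0) :=
    Ioo_mem_nhdsGT_of_mem ⟨le_refl _, hM⟩
  filter_upwards [hmem] with u hu
  have hu01 : u ∈ Set.Ioo (0:ℝ) 1 := ⟨hu.1, lt_trans hu.2 hM1⟩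
  have hspec := cdf_inv_spec hu01
  have hlt : stdNormalCDF (stdNormalCDFInv u) < stdNormalCDF (-M) := by
    rw [hspec]; exact hu.2
  have := cdf_strictMono.lt_iff_lt.1 hlt
  linarith

lemma key_comp {u : ℝ} (hu : u ∈ Set.Ioo (0:ℝ) 1) :
    PsiGOE u / (u ^ 2 * Real.sqrt (Real.log (1 / u))) = Rg (-stdNormalCDFInv u) := by
  obtain ⟨hu0, hu1⟩ := hu
  set x := stdNormalCDFInv u with hx
  set t := -x with ht
  have hspec : stdNormalCDF x = u := cdf_inv_spec ⟨hu0, hu1⟩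
  have hQt : Qg t = u * Real.sqrt (2 * Real.pi) := by
    have h := cdf_neg (-x)
    rw [neg_neg, hspec] at h
    rw [ht, h]
    field_simp
  have hPsi : PsiGOE u = Qg (Real.sqrt 2 * t) / Real.sqrt (2 * Real.pi) := by
    rw [PsiGOE, ← hx, show Real.sqrt 2 * x = -(Real.sqrt 2 * t) by rw [ht]; ring, cdf_neg]
  have hlog : Real.log (1 / u) = Real.log (Real.sqrt (2 * Real.pi) / Qg t) := by
    congr 1
    rw [hQt]
    field_simp
  rw [Rg, hPsi, hlog, hQt]
  have hlogpos : 0 < Real.log (Real.sqrt (2 * Real.pi) / Qg t) := by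
    rw [← hlog]
    exact Real.log_pos (one_lt_one_div hu0 hu1)
  rw [hQt] at hlogpos
  have hL := Real.sqrt_pos.2 hlogpos
  have hsq : Real.sqrt (2 * Real.pi) ^ 2 = 2 * Real.pi :=
    Real.sq_sqrt (by positivity)
  rw [div_eq_div_iff (by positivity) (by positivity)]
  field_simp

/-- GOE tail transfer: `Ψ(u) / (u²√(log(1/u))) → √(2π)` as `u → 0⁺`, and
`Ψ(u) ≤ C u²√(log(1/u))` on `(0, 1/2]`. -/
theorem goe_tail_transfer :
    Tendsto (fun u : ℝ =>
        PsiGOE u / (u ^ 2 * Real.sqrt (Real.log (1 / u))))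
      (nhdsWithin 0 (Set.Ioi 0))
      (nhds (Real.sqrt (2 * Real.pi))) ∧
    ∃ C : ℝ, ∀ u : ℝ, u ∈ Set.Ioc (0 : ℝ) (1 / 2) →
      PsiGOE u ≤ C * (u ^ 2 * Real.sqrt (Real.log (1 / u))) := by
  have part1 : Tendsto (fun u : ℝ =>
      PsiGOE u / (u ^ 2 * Real.sqrt (Real.log (1 / u))))
      (nhdsWithin 0 (Set.Ioi 0)) (nhds (Real.sqrt (2 * Real.pi))) := by
    have h := Rg_tendsto.comp inv_neg_tendsto
    refine h.congr' ?_
    filter_upwards [Ioo_mem_nhdsGT_of_mem (⟨le_refl 0, one_pos⟩ : (0:ℝ) ∈ Set.Ico 0 1)]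
      with u hu
    exact (key_comp hu).symm
  refine ⟨part1, ?_⟩
  have hev : ∀ᶠ u in nhdsWithin (0:ℝ) (Set.Ioi 0),
      PsiGOE u / (u ^ 2 * Real.sqrt (Real.log (1 / u))) < Real.sqrt (2 * Real.pi) + 1 :=
    part1.eventually (eventually_lt_nhds (lt_add_one _))
  rw [eventually_iff, mem_nhdsGT_iff_exists_Ioo_subset] at hev
  obtain ⟨δ, hδmem, hδ⟩ := hev
  have hδ0 : 0 < δ := hδmem
  set δ' := min δ (1/2) with hδ'
  have hδ'0 : 0 < δ' := lt_min hδ0 (by norm_num)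
  have hlog2 : 0 < Real.log 2 := Real.log_pos one_lt_two
  set D : ℝ := δ' ^ 2 * Real.sqrt (Real.log 2) with hD
  have hD0 : 0 < D := by
    refine mul_pos (by positivity) (Real.sqrt_pos.2 hlog2)
  refine ⟨max (Real.sqrt (2 * Real.pi) + 1) (1 / D), fun u ⟨hu0, hu2⟩ => ?_⟩
  have hu1 : u < 1 := lt_of_le_of_lt hu2 (by norm_num)
  have hlogu : 0 < Real.log (1 / u) := Real.log_pos (one_lt_one_div hu0 hu1)
  have hden : 0 < u ^ 2 * Real.sqrt (Real.log (1 / u)) :=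
    mul_pos (by positivity) (Real.sqrt_pos.2 hlogu)
  by_cases hcase : u < δ'
  · have hu_in : u ∈ Set.Ioo 0 δ := ⟨hu0, lt_of_lt_of_le hcase (min_le_left _ _)⟩
    have hF := hδ hu_in
    simp only [Set.mem_setOf_eq] at hF
    have heq : PsiGOE u = (PsiGOE u / (u ^ 2 * Real.sqrt (Real.log (1 / u))))
        * (u ^ 2 * Real.sqrt (Real.log (1 / u))) := by
      field_simp
    rw [heq]
    calc (PsiGOE u / (u ^ 2 * Real.sqrt (Real.log (1 / u))))
          * (u ^ 2 * Real.sqrt (Real.log (1 / u)))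
        ≤ (Real.sqrt (2 * Real.pi) + 1) * (u ^ 2 * Real.sqrt (Real.log (1 / u))) :=
          mul_le_mul_of_nonneg_right hF.le hden.le
      _ ≤ max (Real.sqrt (2 * Real.pi) + 1) (1 / D)
            * (u ^ 2 * Real.sqrt (Real.log (1 / u))) :=
          mul_le_mul_of_nonneg_right (le_max_left _ _) hden.le
  · push_neg at hcase
    have h2u : (2:ℝ) ≤ 1 / u := by
      rw [le_div_iff₀ hu0]; linarith
    have hlogmono : Real.log 2 ≤ Real.log (1 / u) := Real.log_le_log two_pos h2u
    have hDle : D ≤ u ^ 2 * Real.sqrt (Real.log (1 / u)) := by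
      refine mul_le_mul (pow_le_pow_left₀ hδ'0.le hcase 2) (Real.sqrt_le_sqrt hlogmono)
        (Real.sqrt_nonneg _) (by positivity)
    calc PsiGOE u ≤ 1 := (cdf_lt_one _).le
      _ = (1 / D) * D := by field_simp
      _ ≤ (1 / D) * (u ^ 2 * Real.sqrt (Real.log (1 / u))) :=
          mul_le_mul_of_nonneg_left hDle (by positivity)
      _ ≤ max (Real.sqrt (2 * Real.pi) + 1) (1 / D)
            * (u ^ 2 * Real.sqrt (Real.log (1 / u))) :=
          mul_le_mul_of_nonneg_right (le_max_right _ _) hden.le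
end

section
/- Fix real numbers r > 0 and γ ≥ 0. Then lim_{n→∞} n^r (log n)^{-γ} · n ∫₀¹ u^r (1-u)^{n-1} (log(1/u))^γ du = Γ(r+1), where Γ is the Euler Gamma function. Moreover there is a constant C_{r,γ} < ∞, depending only on r and γ, such that n ∫₀¹ u^r (1-u)^{n-1} (log(1/u))^γ du ≤ C_{r,γ} · n^{-r} (log n)^γ for all integers n ≥ 2. -/
open Filter Set

section BetaLogAux

open Filter Set MeasureTheory

/-- Auxiliary family: integrand after the substitution `u = v/n`. -/
noncomputable def blF (r γ : ℝ) (n : ℕ) : ℝ → ℝ :=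
  (Set.Ioo (0:ℝ) (n:ℝ)).indicator
    (fun v => v ^ r * (1 - v / n) ^ (n - 1) * (Real.log (n / v) / Real.log n) ^ γ)

lemma blF_key (r γ : ℝ) (hγ : 0 ≤ γ) {n : ℕ} (hn : 2 ≤ n) :
    (n : ℝ) ^ r * (Real.log n) ^ (-γ) *
        ((n : ℝ) * ∫ u in Set.Ioo (0 : ℝ) 1,
          u ^ r * (1 - u) ^ (n - 1) * (Real.log (1 / u)) ^ γ) =
      ∫ v in Set.Ioi (0:ℝ), blF r γ n v := by
  have hn0 : (0:ℝ) < (n:ℝ) := by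
    have : (2:ℝ) ≤ n := by exact_mod_cast hn
    linarith
  have hlogn : (0:ℝ) < Real.log n := Real.log_pos (by
    have : (2:ℝ) ≤ n := by exact_mod_cast hn
    linarith)
  -- change of variables
  have hsub := MeasureTheory.integral_comp_mul_left_Ioi (blF r γ n) 0 hn0
  rw [mul_zero] at hsub
  -- the composed function is an indicator over (0,1)
  have hcomp : (fun x : ℝ => blF r γ n ((n:ℝ) * x)) =
      (Set.Ioo (0:ℝ) 1).indicator
        (fun u => (n:ℝ) ^ r * (Real.log n) ^ (-γ) *
          (u ^ r * (1 - u) ^ (n - 1) * (Real.log (1 / u)) ^ γ)) := by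
    funext x
    by_cases hx : x ∈ Set.Ioo (0:ℝ) 1
    · have hx1 : (n:ℝ) * x ∈ Set.Ioo (0:ℝ) (n:ℝ) := by
        constructor
        · exact mul_pos hn0 hx.1
        · nlinarith [hx.2]
      rw [blF, Set.indicator_of_mem hx1, Set.indicator_of_mem hx]
      have hx0 : 0 < x := hx.1
      have e1 : ((n:ℝ) * x) ^ r = (n:ℝ) ^ r * x ^ r :=
        Real.mul_rpow hn0.le hx0.le
      have e2 : (1 : ℝ) - (n:ℝ) * x / n = 1 - x := by
        field_simp
      have e3 : (n:ℝ) / ((n:ℝ) * x) = 1 / x := by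
        field_simp
      have e4 : (Real.log (1 / x) / Real.log n) ^ γ =
          (Real.log (1 / x)) ^ γ * (Real.log n) ^ (-γ) := by
        rw [Real.div_rpow (Real.log_nonneg (one_le_one_div hx0 hx.2.le)) hlogn.le]
        rw [Real.rpow_neg hlogn.le, div_eq_mul_inv]
      rw [e1, e2, e3, e4]
      ring
    · have hx1 : (n:ℝ) * x ∉ Set.Ioo (0:ℝ) (n:ℝ) := by
        intro hmem
        apply hx
        constructor
        · by_contra h
          push_neg at h
          nlinarith [hmem.1]
        · by_contra h
          push_neg at h
          nlinarith [hmem.2]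
      rw [blF, Set.indicator_of_notMem hx1, Set.indicator_of_notMem hx]
  rw [hcomp] at hsub
  have hint : ∫ x in Set.Ioi (0:ℝ), (Set.Ioo (0:ℝ) 1).indicator
        (fun u => (n:ℝ) ^ r * (Real.log n) ^ (-γ) *
          (u ^ r * (1 - u) ^ (n - 1) * (Real.log (1 / u)) ^ γ)) x =
      (n:ℝ) ^ r * (Real.log n) ^ (-γ) *
        ∫ u in Set.Ioo (0:ℝ) 1, u ^ r * (1 - u) ^ (n - 1) * (Real.log (1 / u)) ^ γ := by
    rw [MeasureTheory.setIntegral_indicator measurableSet_Ioo,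
      Set.inter_eq_right.mpr Set.Ioo_subset_Ioi_self,
      MeasureTheory.integral_const_mul]
  rw [hint] at hsub
  have : ∫ x in Set.Ioi (0:ℝ), blF r γ n x =
      (n:ℝ) • ((n:ℝ) ^ r * (Real.log n) ^ (-γ) *
        ∫ u in Set.Ioo (0:ℝ) 1, u ^ r * (1 - u) ^ (n - 1) * (Real.log (1 / u)) ^ γ) := by
    rw [hsub, smul_smul, mul_inv_cancel₀ hn0.ne', one_smul]
  rw [this, smul_eq_mul]
  ring

noncomputable def blG (r γ : ℝ) (v : ℝ) : ℝ :=
  (1 + 1 / (r / (γ + 1) * Real.log 2)) ^ γ * (v ^ (r / (γ + 1)) * Real.exp (-v / 2)) +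
    v ^ r * Real.exp (-v / 2)

lemma blG_nonneg (r γ : ℝ) (hr : 0 < r) (hγ : 0 ≤ γ) {v : ℝ} (hv : 0 < v) :
    0 ≤ blG r γ v := by
  have h2 : (0:ℝ) < Real.log 2 := Real.log_pos one_lt_two
  have hδ : 0 < r / (γ + 1) := by positivity
  have hprod : 0 < r / (γ + 1) * Real.log 2 := mul_pos hδ h2
  have hc : (0:ℝ) ≤ 1 + 1 / (r / (γ + 1) * Real.log 2) := by
    have := one_div_pos.mpr hprod; linarith
  unfold blG
  have := Real.rpow_nonneg hc γ
  have := Real.rpow_nonneg hv.le (r / (γ + 1))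
  have := Real.rpow_nonneg hv.le r
  positivity

lemma blG_int (r γ : ℝ) (hr : 0 < r) (hγ : 0 ≤ γ) :
    IntegrableOn (blG r γ) (Set.Ioi 0) := by
  have h1 : ∀ s : ℝ, 0 < s →
      IntegrableOn (fun v : ℝ => v ^ s * Real.exp (-v / 2)) (Set.Ioi 0) := by
    intro s hs
    have h := integrableOn_rpow_mul_exp_neg_mul_rpow (p := 1) (s := s) (b := 1/2)
      (by linarith) zero_lt_one (by norm_num)
    refine h.congr_fun (fun x _ => ?_) measurableSet_Ioi
    dsimp only; rw [Real.rpow_one]; congr 1; ring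
  exact ((h1 _ (by positivity)).const_mul _).add (h1 r hr)

lemma blF_meas (r γ : ℝ) (n : ℕ) : Measurable (blF r γ n) := by
  unfold blF
  apply Measurable.indicator _ measurableSet_Ioo
  have m1 : Measurable fun v : ℝ => v ^ r := measurable_id.pow_const _
  have m2 : Measurable fun v : ℝ => (1 - v / (n:ℝ)) ^ (n - 1) :=
    (measurable_const.sub (measurable_id.div_const _)).pow_const _
  have m3 : Measurable fun v : ℝ => (Real.log ((n:ℝ) / v) / Real.log n) ^ γ := by
    have : Measurable fun v : ℝ => Real.log ((n:ℝ) / v) :=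
      Real.measurable_log.comp (measurable_const.div measurable_id)
    exact (this.div_const _).pow_const _
  exact (m1.mul m2).mul m3

lemma blF_le_blG (r γ : ℝ) (hr : 0 < r) (hγ : 0 ≤ γ) {n : ℕ} (hn : 2 ≤ n) {v : ℝ}
    (hv : 0 < v) : ‖blF r γ n v‖ ≤ blG r γ v := by
  have hlog2 : (0:ℝ) < Real.log 2 := Real.log_pos one_lt_two
  have hδ : 0 < r / (γ + 1) := by positivity
  set δ : ℝ := r / (γ + 1) with hδdef
  have hprod : 0 < δ * Real.log 2 := mul_pos hδ hlog2
  have hc : (0:ℝ) ≤ 1 + 1 / (δ * Real.log 2) := by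
    have := one_div_pos.mpr hprod; linarith
  by_cases hmem : v ∈ Set.Ioo (0:ℝ) (n:ℝ)
  · have hn2 : (2:ℝ) ≤ n := by exact_mod_cast hn
    have hn0 : (0:ℝ) < n := by linarith
    have hvn : v < n := hmem.2
    have hlogn : (0:ℝ) < Real.log n := Real.log_pos (by linarith)
    have hbase : 0 ≤ 1 - v / (n:ℝ) := by
      rw [sub_nonneg]; exact (div_le_one hn0).mpr hvn.le
    have hratio0 : 0 ≤ Real.log ((n:ℝ) / v) / Real.log n :=
      div_nonneg (Real.log_nonneg ((one_le_div hv).mpr hvn.le)) hlogn.le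
    have hP0 : 0 ≤ v ^ r * (1 - v / (n:ℝ)) ^ (n - 1) *
        (Real.log ((n:ℝ) / v) / Real.log n) ^ γ :=
      mul_nonneg (mul_nonneg (Real.rpow_nonneg hv.le r) (pow_nonneg hbase _))
        (Real.rpow_nonneg hratio0 γ)
    rw [blF, Set.indicator_of_mem hmem, Real.norm_eq_abs, abs_of_nonneg hP0]
    -- exponential bound for the power term
    have E1 : (1 - v / (n:ℝ)) ^ (n - 1) ≤ Real.exp (-v / 2) := by
      have ha : 1 - v / (n:ℝ) ≤ Real.exp (-(v / n)) := by
        have := Real.add_one_le_exp (-(v / (n:ℝ))); linarith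
      calc (1 - v / (n:ℝ)) ^ (n - 1) ≤ Real.exp (-(v / n)) ^ (n - 1) :=
            pow_le_pow_left₀ hbase ha _
        _ = Real.exp (((n - 1 : ℕ) : ℝ) * (-(v / n))) := by rw [← Real.exp_nat_mul]
        _ ≤ Real.exp (-v / 2) := by
            apply Real.exp_le_exp.mpr
            have hcast : ((n - 1 : ℕ) : ℝ) = (n:ℝ) - 1 := by
              have h1 : 1 ≤ n := by omega
              push_cast [h1]; ring
            rw [hcast]
            have key : v / 2 ≤ ((n:ℝ) - 1) * (v / n) := by
              rw [← mul_div_assoc, div_le_div_iff₀ two_pos hn0]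
              nlinarith [mul_nonneg hv.le (show (0:ℝ) ≤ (n:ℝ) - 2 by linarith)]
            linarith
    by_cases hv1 : 1 ≤ v
    · -- ratio ≤ 1
      have hratio1 : Real.log ((n:ℝ) / v) / Real.log n ≤ 1 := by
        rw [div_le_one hlogn]
        exact Real.log_le_log (by positivity) (div_le_self hn0.le hv1)
      have hR : (Real.log ((n:ℝ) / v) / Real.log n) ^ γ ≤ 1 :=
        Real.rpow_le_one hratio0 hratio1 hγ
      have : v ^ r * (1 - v / (n:ℝ)) ^ (n - 1) *
          (Real.log ((n:ℝ) / v) / Real.log n) ^ γ ≤ v ^ r * Real.exp (-v / 2) * 1 := by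
        gcongr
      rw [mul_one] at this
      refine this.trans ?_
      unfold blG
      rw [← hδdef]
      have h1 : 0 ≤ (1 + 1 / (δ * Real.log 2)) ^ γ * (v ^ δ * Real.exp (-v / 2)) :=
        mul_nonneg (Real.rpow_nonneg hc γ)
          (mul_nonneg (Real.rpow_nonneg hv.le δ) (Real.exp_nonneg _))
      linarith
    · push_neg at hv1
      have hvd1 : 1 ≤ v ^ (-δ) := by
        exact Real.one_le_rpow_of_pos_of_le_one_of_nonpos hv hv1.le (by linarith)
      have hL : Real.log (1 / v) ≤ v ^ (-δ) / δ := by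
        have h := Real.log_le_rpow_div (le_of_lt (one_div_pos.mpr hv)) hδ
        rw [one_div, Real.inv_rpow hv.le, ← Real.rpow_neg hv.le] at h
        rwa [one_div]
      have hsplit : Real.log ((n:ℝ) / v) = Real.log n + Real.log (1 / v) := by
        rw [Real.log_div hn0.ne' hv.ne', Real.log_div one_ne_zero hv.ne', Real.log_one]
        ring
      have hlog2n : Real.log 2 ≤ Real.log n := Real.log_le_log two_pos hn2
      have hLnn : 0 ≤ Real.log (1 / v) := Real.log_nonneg (one_le_one_div hv hv1.le)
      have hratio_le : Real.log ((n:ℝ) / v) / Real.log n ≤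
          (1 + 1 / (δ * Real.log 2)) * v ^ (-δ) := by
        have h1 : Real.log ((n:ℝ) / v) / Real.log n = 1 + Real.log (1 / v) / Real.log n := by
          rw [hsplit, add_div, div_self hlogn.ne']
        rw [h1]
        have h2 : Real.log (1 / v) / Real.log n ≤ Real.log (1 / v) / Real.log 2 := by
          gcongr
        have h3 : Real.log (1 / v) / Real.log 2 ≤ (v ^ (-δ) / δ) / Real.log 2 := by
          gcongr
        rw [div_div] at h3
        have h4 : (1 + 1 / (δ * Real.log 2)) * v ^ (-δ) =
            v ^ (-δ) + v ^ (-δ) / (δ * Real.log 2) := by ring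
        rw [h4]
        linarith
      have hR : (Real.log ((n:ℝ) / v) / Real.log n) ^ γ ≤
          (1 + 1 / (δ * Real.log 2)) ^ γ * v ^ (-δ * γ) := by
        calc (Real.log ((n:ℝ) / v) / Real.log n) ^ γ
            ≤ ((1 + 1 / (δ * Real.log 2)) * v ^ (-δ)) ^ γ :=
              Real.rpow_le_rpow hratio0 hratio_le hγ
          _ = (1 + 1 / (δ * Real.log 2)) ^ γ * v ^ (-δ * γ) := by
              rw [Real.mul_rpow hc (Real.rpow_nonneg hv.le _), ← Real.rpow_mul hv.le]
      have hcomb : v ^ r * (1 - v / (n:ℝ)) ^ (n - 1) *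
          (Real.log ((n:ℝ) / v) / Real.log n) ^ γ ≤
          v ^ r * Real.exp (-v / 2) * ((1 + 1 / (δ * Real.log 2)) ^ γ * v ^ (-δ * γ)) := by
        gcongr
      refine hcomb.trans ?_
      have hγ1 : (0:ℝ) < γ + 1 := by linarith
      have hexp : v ^ r * v ^ (-δ * γ) = v ^ δ := by
        rw [← Real.rpow_add hv]
        congr 1
        rw [hδdef]
        field_simp
        ring
      have heq : v ^ r * Real.exp (-v / 2) * ((1 + 1 / (δ * Real.log 2)) ^ γ * v ^ (-δ * γ)) =
          (1 + 1 / (δ * Real.log 2)) ^ γ * (v ^ δ * Real.exp (-v / 2)) := by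
        rw [← hexp]; ring
      rw [heq]
      unfold blG
      rw [← hδdef]
      have h2nn : 0 ≤ v ^ r * Real.exp (-v / 2) :=
        mul_nonneg (Real.rpow_nonneg hv.le r) (Real.exp_nonneg _)
      linarith
  · rw [blF, Set.indicator_of_notMem hmem, norm_zero]
    exact blG_nonneg r γ hr hγ hv

lemma blF_tendsto (r γ : ℝ) (hγ : 0 ≤ γ) {v : ℝ} (hv : 0 < v) :
    Filter.Tendsto (fun n : ℕ => blF r γ n v) Filter.atTop
      (nhds (v ^ r * Real.exp (-v))) := by
  have h1 : Filter.Tendsto (fun n : ℕ => (1 - v / (n:ℝ)) ^ (n - 1)) Filter.atTop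
      (nhds (Real.exp (-v))) := by
    have ha := Real.tendsto_one_add_div_pow_exp (-v)
    have hb : Filter.Tendsto (fun n : ℕ => 1 + (-v) / (n:ℝ)) Filter.atTop (nhds 1) := by
      have := tendsto_const_div_atTop_nhds_zero_nat (-v)
      simpa using this.const_add 1
    have hc := ha.div hb one_ne_zero
    rw [div_one] at hc
    refine Filter.Tendsto.congr' ?_ hc
    filter_upwards [Filter.eventually_gt_atTop ⌈v⌉₊, Filter.eventually_ge_atTop 1]
      with n hnv hn1
    have hvn : v < (n:ℝ) := lt_of_le_of_lt (Nat.le_ceil v) (by exact_mod_cast hnv)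
    have hn0 : (0:ℝ) < n := lt_trans hv hvn
    have hrw : (1:ℝ) + -v / (n:ℝ) = 1 - v / n := by ring
    have hne : (1:ℝ) - v / (n:ℝ) ≠ 0 := by
      have : v / (n:ℝ) < 1 := (div_lt_one hn0).mpr hvn
      intro h; rw [sub_eq_zero] at h; rw [← h] at this; exact lt_irrefl _ this
    show (1 + -v / (n:ℝ)) ^ n / (1 + -v / (n:ℝ)) = (1 - v / (n:ℝ)) ^ (n - 1)
    rw [hrw]
    obtain ⟨k, rfl⟩ : ∃ k, n = k + 1 := ⟨n - 1, (Nat.succ_pred_eq_of_pos hn1).symm⟩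
    rw [pow_succ, Nat.add_sub_cancel, mul_div_cancel_right₀ _ hne]
  have h2 : Filter.Tendsto (fun n : ℕ => (Real.log ((n:ℝ) / v) / Real.log n) ^ γ)
      Filter.atTop (nhds 1) := by
    have hl : Filter.Tendsto (fun n : ℕ => Real.log ((n:ℝ) / v) / Real.log n)
        Filter.atTop (nhds 1) := by
      have hlogtop : Filter.Tendsto (fun n : ℕ => Real.log n) Filter.atTop Filter.atTop :=
        Real.tendsto_log_atTop.comp tendsto_natCast_atTop_atTop
      have hz : Filter.Tendsto (fun n : ℕ => Real.log v / Real.log n) Filter.atTop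
          (nhds 0) := tendsto_const_nhds.div_atTop hlogtop
      have h1' : Filter.Tendsto (fun n : ℕ => 1 - Real.log v / Real.log n) Filter.atTop
          (nhds 1) := by
        have := (tendsto_const_nhds :
          Filter.Tendsto (fun _ : ℕ => (1:ℝ)) Filter.atTop (nhds 1)).sub hz
        simpa using this
      refine Filter.Tendsto.congr' ?_ h1'
      filter_upwards [Filter.eventually_ge_atTop 2] with n hn
      have hn2 : (2:ℝ) ≤ n := by exact_mod_cast hn
      have hn0 : (0:ℝ) < n := by linarith
      have hlogn : Real.log n ≠ 0 := (Real.log_pos (by linarith)).ne'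
      rw [Real.log_div hn0.ne' hv.ne', sub_div, div_self hlogn]
    have := hl.rpow_const (Or.inr hγ)
    simpa using this
  have h3 := ((tendsto_const_nhds (x := v ^ r)).mul h1).mul h2
  rw [mul_one] at h3
  refine Filter.Tendsto.congr' ?_ h3
  filter_upwards [Filter.eventually_gt_atTop ⌈v⌉₊] with n hn
  have hvn : v < (n:ℝ) := lt_of_le_of_lt (Nat.le_ceil v) (by exact_mod_cast hn)
  rw [blF, Set.indicator_of_mem (Set.mem_Ioo.mpr ⟨hv, hvn⟩)]

lemma blF_nonneg (r γ : ℝ) (n : ℕ) (v : ℝ) : 0 ≤ blF r γ n v := by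
  rw [blF]
  apply Set.indicator_nonneg
  intro x hx
  have hx0 : 0 < x := hx.1
  have hxn : x < (n:ℝ) := hx.2
  have hn0 : (0:ℝ) < n := lt_trans hx0 hxn
  have hbase : 0 ≤ 1 - x / (n:ℝ) := by
    rw [sub_nonneg]; exact (div_le_one hn0).mpr hxn.le
  have hn1 : (1:ℝ) ≤ n := by
    have := Nat.cast_pos.mp hn0
    exact_mod_cast this
  have hratio : 0 ≤ Real.log ((n:ℝ) / x) / Real.log n :=
    div_nonneg (Real.log_nonneg ((one_le_div hx0).mpr hxn.le)) (Real.log_nonneg hn1)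
  exact mul_nonneg (mul_nonneg (Real.rpow_nonneg hx0.le r) (pow_nonneg hbase _))
    (Real.rpow_nonneg hratio γ)

theorem beta_log_integral' (r γ : ℝ) (hr : 0 < r) (hγ : 0 ≤ γ) :
    Filter.Tendsto (fun n : ℕ =>
        (n : ℝ) ^ r * (Real.log n) ^ (-γ) *
          ((n : ℝ) * ∫ u in Set.Ioo (0 : ℝ) 1,
            u ^ r * (1 - u) ^ (n - 1) * (Real.log (1 / u)) ^ γ))
      Filter.atTop (nhds (Real.Gamma (r + 1))) ∧
    ∃ C : ℝ, ∀ n : ℕ, 2 ≤ n →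
      (n : ℝ) * (∫ u in Set.Ioo (0 : ℝ) 1,
          u ^ r * (1 - u) ^ (n - 1) * (Real.log (1 / u)) ^ γ) ≤
        C * (n : ℝ) ^ (-r) * (Real.log n) ^ γ := by
  constructor
  · have key : ∀ᶠ n : ℕ in Filter.atTop,
        (∫ v in Set.Ioi (0:ℝ), blF r γ n v) =
          (n : ℝ) ^ r * (Real.log n) ^ (-γ) *
            ((n : ℝ) * ∫ u in Set.Ioo (0 : ℝ) 1,
              u ^ r * (1 - u) ^ (n - 1) * (Real.log (1 / u)) ^ γ) := by
      filter_upwards [Filter.eventually_ge_atTop 2] with n hn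
      exact (blF_key r γ hγ hn).symm
    have hmain : Filter.Tendsto (fun n : ℕ => ∫ v in Set.Ioi (0:ℝ), blF r γ n v)
        Filter.atTop (nhds (Real.Gamma (r + 1))) := by
      have hΓ : Real.Gamma (r + 1) = ∫ v in Set.Ioi (0:ℝ), v ^ r * Real.exp (-v) := by
        rw [Real.Gamma_eq_integral (by linarith)]
        simp only [add_sub_cancel_right]
        exact MeasureTheory.setIntegral_congr_fun measurableSet_Ioi
          (fun x _ => mul_comm _ _)
      rw [hΓ, ← Filter.tendsto_add_atTop_iff_nat 2]
      apply MeasureTheory.tendsto_integral_of_dominated_convergence (blG r γ)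
      · exact fun k => (blF_meas r γ (k + 2)).aestronglyMeasurable
      · exact blG_int r γ hr hγ
      · intro k
        filter_upwards [MeasureTheory.ae_restrict_mem measurableSet_Ioi] with v hv
        exact blF_le_blG r γ hr hγ (by omega) hv
      · filter_upwards [MeasureTheory.ae_restrict_mem measurableSet_Ioi] with v hv
        exact (blF_tendsto r γ hγ hv).comp (Filter.tendsto_add_atTop_nat 2)
    exact Filter.Tendsto.congr' key hmain
  · refine ⟨∫ v in Set.Ioi (0:ℝ), blG r γ v, fun n hn => ?_⟩
    have hkey := blF_key r γ hγ hn
    have hn2 : (2:ℝ) ≤ n := by exact_mod_cast hn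
    have hn0 : (0:ℝ) < n := by linarith
    have hlogn : (0:ℝ) < Real.log n := Real.log_pos (by linarith)
    have hle : (∫ v in Set.Ioi (0:ℝ), blF r γ n v) ≤ ∫ v in Set.Ioi (0:ℝ), blG r γ v := by
      apply MeasureTheory.integral_mono_of_nonneg
      · filter_upwards with v
        exact blF_nonneg r γ n v
      · exact blG_int r γ hr hγ
      · filter_upwards [MeasureTheory.ae_restrict_mem measurableSet_Ioi] with v hv
        exact (le_abs_self _).trans (blF_le_blG r γ hr hγ hn hv)
    rw [← hkey] at hle
    have e1 : (n:ℝ) ^ (-r) * (n:ℝ) ^ r = 1 := by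
      rw [← Real.rpow_add hn0]; simp
    have e2 : Real.log (n:ℝ) ^ γ * Real.log (n:ℝ) ^ (-γ) = 1 := by
      rw [← Real.rpow_add hlogn]; simp
    set X := (n : ℝ) * ∫ u in Set.Ioo (0 : ℝ) 1,
        u ^ r * (1 - u) ^ (n - 1) * (Real.log (1 / u)) ^ γ with hX
    set C := ∫ v in Set.Ioi (0:ℝ), blG r γ v with hC
    calc X = ((n:ℝ) ^ (-r) * (n:ℝ) ^ r) * (Real.log (n:ℝ) ^ γ * Real.log (n:ℝ) ^ (-γ)) * X := by
          rw [e1, e2]; ring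
      _ = ((n:ℝ) ^ (-r) * Real.log (n:ℝ) ^ γ) * ((n:ℝ) ^ r * Real.log (n:ℝ) ^ (-γ) * X) := by
          ring
      _ ≤ ((n:ℝ) ^ (-r) * Real.log (n:ℝ) ^ γ) * C := by
          apply mul_le_mul_of_nonneg_left hle
          exact mul_nonneg (Real.rpow_nonneg hn0.le _) (Real.rpow_nonneg hlogn.le _)
      _ = C * (n:ℝ) ^ (-r) * Real.log (n:ℝ) ^ γ := by ring

end BetaLogAux

/-- Beta-log integral: for fixed `r > 0` and `γ ≥ 0`,
`n^r (log n)^{-γ} · n∫₀¹ u^r (1-u)^{n-1}(log(1/u))^γ du → Γ(r+1)`, and the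
integral admits the matching upper bound for all `n ≥ 2`. -/
theorem beta_log_integral (r γ : ℝ) (hr : 0 < r) (hγ : 0 ≤ γ) :
    Tendsto (fun n : ℕ =>
        (n : ℝ) ^ r * (Real.log n) ^ (-γ) *
          ((n : ℝ) * ∫ u in Set.Ioo (0 : ℝ) 1,
            u ^ r * (1 - u) ^ (n - 1) * (Real.log (1 / u)) ^ γ))
      atTop (nhds (Real.Gamma (r + 1))) ∧
    ∃ C : ℝ, ∀ n : ℕ, 2 ≤ n →
      (n : ℝ) * (∫ u in Set.Ioo (0 : ℝ) 1,
          u ^ r * (1 - u) ^ (n - 1) * (Real.log (1 / u)) ^ γ) ≤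
        C * (n : ℝ) ^ (-r) * (Real.log n) ^ γ :=
  beta_log_integral' r γ hr hγ
end

section
/- Let m, a, b, c be real numbers with m ≤ a ≤ c. Then there exists t ∈ [0,1] with a·t² + 2b·t(1−t) + c·(1−t)² < m if and only if b < m − √((a−m)(c−m)). -/
/-- Exact two-point threshold: for `m ≤ a ≤ c`, the edge quadratic
`t ↦ at² + 2bt(1−t) + c(1−t)²` dips strictly below `m` on `[0,1]` if and only
if `b < m − √((a−m)(c−m))`. -/
theorem two_point_threshold (m a b c : ℝ) (h1 : m ≤ a) (h2 : a ≤ c) :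
    (∃ t ∈ Set.Icc (0 : ℝ) 1,
        a * t ^ 2 + 2 * b * t * (1 - t) + c * (1 - t) ^ 2 < m) ↔
      b < m - Real.sqrt ((a - m) * (c - m)) := by
  have hA : 0 ≤ a - m := by linarith
  have hC : 0 ≤ c - m := by linarith
  have hs0 : 0 ≤ Real.sqrt ((a - m) * (c - m)) := Real.sqrt_nonneg _
  have hs2 : Real.sqrt ((a - m) * (c - m)) ^ 2 = (a - m) * (c - m) :=
    Real.sq_sqrt (mul_nonneg hA hC)
  constructor
  · rintro ⟨t, ⟨ht0, ht1⟩, hq⟩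
    have htne0 : t ≠ 0 := by rintro rfl; norm_num at hq; linarith
    have htne1 : t ≠ 1 := by rintro rfl; norm_num at hq; linarith
    have ht0' : 0 < t := lt_of_le_of_ne ht0 (Ne.symm htne0)
    have ht1' : t < 1 := lt_of_le_of_ne ht1 htne1
    have hpos : 0 < t * (1 - t) := mul_pos ht0' (by linarith)
    have key : Real.sqrt (a - m) * Real.sqrt (c - m) = Real.sqrt ((a - m) * (c - m)) :=
      (Real.sqrt_mul hA _).symm
    by_contra h
    push_neg at h
    nlinarith [sq_nonneg (Real.sqrt (a - m) * t - Real.sqrt (c - m) * (1 - t)),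
      Real.sq_sqrt hA, Real.sq_sqrt hC, hpos, hs0, key, hq,
      mul_nonneg hpos.le (show (0:ℝ) ≤ b - (m - Real.sqrt ((a - m) * (c - m))) by linarith)]
  · intro hb
    have hbm : b < m := by linarith
    have hK : 0 < a + c - 2 * b := by linarith
    refine ⟨(c - b) / (a + c - 2 * b), ⟨div_nonneg (by linarith) hK.le, ?_⟩, ?_⟩
    · rw [div_le_one hK]; linarith
    · have hlt : (a - m) * (c - m) < (b - m) ^ 2 := by
        nlinarith [hs2, hs0]
      have hval : a * ((c - b) / (a + c - 2 * b)) ^ 2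
          + 2 * b * ((c - b) / (a + c - 2 * b)) * (1 - (c - b) / (a + c - 2 * b))
          + c * (1 - (c - b) / (a + c - 2 * b)) ^ 2 - m
          = ((a - m) * (c - m) - (b - m) ^ 2) / (a + c - 2 * b) := by
        have hxK : (c - b) / (a + c - 2 * b) * (a + c - 2 * b) = c - b := div_mul_cancel₀ _ hK.ne'
        rw [eq_div_iff hK.ne']
        linear_combination ((c - b) / (a + c - 2 * b) * (a + c - 2 * b) - (c - b)) * hxK
      have : ((a - m) * (c - m) - (b - m) ^ 2) / (a + c - 2 * b) < 0 :=
        div_neg_of_neg_of_pos (by linarith) hK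
      linarith
end

section
/- Let Q be a symmetric real n×n matrix and suppose x ∈ Δ^{n-1} is the unique global minimizer of y ↦ yᵀQy over Δ^{n-1}. Let K := {i : x_i > 0} and k := |K|, and assume k ≥ 2. Then there exists i ∈ K such that (1/k) Σ_{j∈K} Q_{ij} < min_{1≤r≤n} Q_{rr}. -/
/-!
Let `m = xᵀQx` be the minimum. The first-order condition at `x` on the simplex, tested at the
vertices, gives `(Qx)_j ≥ m` for every `j`, with equality on the support `K` because
`Σ_j x_j (Qx)_j = m`. Weighting the row sums `Σ_{j∈K} Q_ij` by `x_i` therefore gives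
`Σ_{j∈K} (Qx)_j = k m`, so some row average over `K` is at most `m`. Finally `m < Q_rr`: the vertex
`e_r` has value `Q_rr ≥ m`, and equality would make `e_r` a second minimiser, while `x`, having two
positive coordinates, is not a vertex.
-/

open Matrix Finset Filter Topology

namespace Matrix.IsSymm

variable {ι : Type*} [Fintype ι] {Q : Matrix ι ι ℝ}

theorem dotProduct_mulVec_comm (hQ : Q.IsSymm) (a b : ι → ℝ) :
    a ⬝ᵥ Q *ᵥ b = b ⬝ᵥ Q *ᵥ a := by
  rw [dotProduct_mulVec, dotProduct_comm, ← mulVec_transpose, hQ.eq]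

theorem quadForm_add_smul (hQ : Q.IsSymm) (x v : ι → ℝ) (t : ℝ) :
    (x + t • v) ⬝ᵥ Q *ᵥ (x + t • v) =
      x ⬝ᵥ Q *ᵥ x + 2 * t * (v ⬝ᵥ Q *ᵥ x) + t ^ 2 * (v ⬝ᵥ Q *ᵥ v) := by
  simp only [mulVec_add, mulVec_smul, dotProduct_add, add_dotProduct, dotProduct_smul,
    smul_dotProduct, smul_eq_mul, hQ.dotProduct_mulVec_comm x v]
  ring

theorem dotProduct_mulVec_le_of_isMinOn (hQ : Q.IsSymm) {S : Set (ι → ℝ)} (hS : Convex ℝ S)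
    {x y : ι → ℝ} (hmin : IsMinOn (fun z => z ⬝ᵥ Q *ᵥ z) S x) (hx : x ∈ S) (hy : y ∈ S) :
    x ⬝ᵥ Q *ᵥ x ≤ y ⬝ᵥ Q *ᵥ x := by
  set v := y - x
  have hslope : ∀ t ∈ Set.Ioc (0 : ℝ) 1, 0 ≤ 2 * (v ⬝ᵥ Q *ᵥ x) + t * (v ⬝ᵥ Q *ᵥ v) := by
    rintro t ⟨ht0, ht1⟩
    have := isMinOn_iff.mp hmin _ (hS.add_smul_sub_mem hx hy ⟨ht0.le, ht1⟩)
    rw [hQ.quadForm_add_smul] at this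
    nlinarith
  have hlim : Tendsto (fun t : ℝ => 2 * (v ⬝ᵥ Q *ᵥ x) + t * (v ⬝ᵥ Q *ᵥ v)) (𝓝[>] 0)
      (𝓝 (2 * (v ⬝ᵥ Q *ᵥ x))) := by
    refine tendsto_nhdsWithin_of_tendsto_nhds ?_
    simpa using (continuous_id.mul continuous_const).const_add (2 * (v ⬝ᵥ Q *ᵥ x)) |>.tendsto 0
  have := ge_of_tendsto hlim (eventually_of_mem (Ioc_mem_nhdsGT one_pos) hslope)
  simp only [v, sub_dotProduct] at this
  linarith

theorem mulVec_apply_eq_of_isMinOn_stdSimplex [DecidableEq ι] (hQ : Q.IsSymm) {x : ι → ℝ}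
    (hmin : IsMinOn (fun z => z ⬝ᵥ Q *ᵥ z) (stdSimplex ℝ ι) x) (hx : x ∈ stdSimplex ℝ ι)
    {j : ι} (hj : 0 < x j) : (Q *ᵥ x) j = x ⬝ᵥ Q *ᵥ x := by
  have hge : ∀ i, x ⬝ᵥ Q *ᵥ x ≤ (Q *ᵥ x) i := fun i => by
    simpa [single_dotProduct] using
      hQ.dotProduct_mulVec_le_of_isMinOn (convex_stdSimplex ℝ ι) hmin hx (single_mem_stdSimplex ℝ i)
  have hsum : ∑ i, x i * ((Q *ᵥ x) i - x ⬝ᵥ Q *ᵥ x) = 0 := by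
    simp only [mul_sub, sum_sub_distrib, ← sum_mul, hx.2, one_mul, dotProduct, sub_self]
  have := (sum_eq_zero_iff_of_nonneg fun i _ => mul_nonneg (hx.1 i) (sub_nonneg.2 (hge i))).1
    hsum j (mem_univ j)
  rw [mul_eq_zero, sub_eq_zero] at this
  exact this.resolve_left hj.ne'

theorem exists_sum_le_card_mul_of_mulVec_eq (hQ : Q.IsSymm) {x : ι → ℝ}
    (hx : x ∈ stdSimplex ℝ ι) {c : ℝ} (hc : ∀ j, 0 < x j → (Q *ᵥ x) j = c) :
    ∃ i, 0 < x i ∧ ∑ j ∈ {j | 0 < x j}, Q i j ≤ #{j | 0 < x j} * c := by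
  set K : Finset ι := {j | 0 < x j}
  have hsum_supp : ∀ f : ι → ℝ, ∑ i ∈ K, x i * f i = ∑ i, x i * f i := fun f =>
    sum_filter_of_ne fun i _ h => (hx.1 i).lt_of_ne' (left_ne_zero_of_mul h)
  have hxK : ∑ i ∈ K, x i = 1 :=
    (sum_filter_of_ne fun i _ h => (hx.1 i).lt_of_ne' h).trans hx.2
  have hcol : ∀ j ∈ K, ∑ i ∈ K, x i * Q i j = c := fun j hj => by
    rw [hsum_supp, ← hc j (mem_filter.1 hj).2, mulVec, dotProduct]
    exact sum_congr rfl fun i _ => by rw [hQ.apply j i, mul_comm]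
  have hweighted : ∑ i ∈ K, x i * ∑ j ∈ K, Q i j = ∑ i ∈ K, x i * (#K * c) := by
    rw [← sum_mul, hxK, one_mul]
    simp only [mul_sum]
    rw [sum_comm, sum_congr rfl hcol, sum_const, nsmul_eq_mul]
  obtain ⟨i, hi, hle⟩ := exists_le_of_sum_le (nonempty_of_sum_ne_zero (hxK ▸ one_ne_zero))
    hweighted.le
  have hxi : 0 < x i := (mem_filter.1 hi).2
  exact ⟨i, hxi, le_of_mul_le_mul_left hle hxi⟩

end Matrix.IsSymm

theorem lt_diag_of_isMinOn_stdSimplex {ι : Type*} [Fintype ι] [DecidableEq ι]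
    {Q : Matrix ι ι ℝ} {x : ι → ℝ} (hmin : IsMinOn (fun z => z ⬝ᵥ Q *ᵥ z) (stdSimplex ℝ ι) x)
    (huniq : ∀ y ∈ stdSimplex ℝ ι, IsMinOn (fun z => z ⬝ᵥ Q *ᵥ z) (stdSimplex ℝ ι) y → y = x)
    {r : ι} (hr : x ≠ Pi.single r 1) : x ⬝ᵥ Q *ᵥ x < Q r r := by
  have hvertex : Pi.single r 1 ⬝ᵥ Q *ᵥ Pi.single r 1 = Q r r := by
    simp [single_dotProduct]
  refine (hvertex ▸ isMinOn_iff.1 hmin _ (single_mem_stdSimplex ℝ r)).lt_of_ne fun heq => hr ?_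
  refine (huniq _ (single_mem_stdSimplex ℝ r) ?_).symm
  exact isMinOn_iff.2 fun z hz => hvertex.trans heq.symm |>.trans_le (isMinOn_iff.1 hmin z hz)

theorem card_filter_pos_single_le_one {ι : Type*} [Fintype ι] [DecidableEq ι] (r : ι) (a : ℝ) :
    #{i | 0 < Pi.single (M := fun _ => ℝ) r a i} ≤ 1 :=
  have hsupp : ∀ i ∈ ({i | 0 < Pi.single (M := fun _ => ℝ) r a i} : Finset ι), i = r :=
    fun i hi => by_contra fun h => by simp [Pi.single_eq_of_ne h] at hi
  card_le_one.2 fun i hi j hj => (hsupp i hi).trans (hsupp j hj).symm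

/-- Deterministic row-average necessary condition: if `x` is the unique global
minimizer of `y ↦ yᵀQy` over the standard simplex, with support `K` of
cardinality `k ≥ 2`, then some active row `i ∈ K` satisfies
`(1/k)Σ_{j∈K} Q_{ij} < min_r Q_{rr}`. -/
theorem row_average_necessary_condition (n : ℕ)
    (Q : Matrix (Fin n) (Fin n) ℝ) (hQ : Q.IsSymm)
    (x : Fin n → ℝ) (hx : x ∈ stdSimplex ℝ (Fin n))
    (hmin : ∀ y ∈ stdSimplex ℝ (Fin n), x ⬝ᵥ Q.mulVec x ≤ y ⬝ᵥ Q.mulVec y)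
    (huniq : ∀ y ∈ stdSimplex ℝ (Fin n),
        (∀ z ∈ stdSimplex ℝ (Fin n), y ⬝ᵥ Q.mulVec y ≤ z ⬝ᵥ Q.mulVec z) → y = x)
    (K : Finset (Fin n)) (hK : K = Finset.univ.filter fun i => 0 < x i)
    (hk : 2 ≤ K.card) :
    ∃ i ∈ K, (1 / (K.card : ℝ)) * ∑ j ∈ K, Q i j < ⨅ r : Fin n, Q r r := by
  subst hK
  have hmin_on := (isMinOn_iff (f := fun z => z ⬝ᵥ Q *ᵥ z)).2 hmin
  obtain ⟨i, hi, hrow⟩ := hQ.exists_sum_le_card_mul_of_mulVec_eq hx fun j hj =>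
    hQ.mulVec_apply_eq_of_isMinOn_stdSimplex hmin_on hx hj
  have hk0 : (0 : ℝ) < #{i | 0 < x i} := by exact_mod_cast (by omega : 0 < #{i | 0 < x i})
  have : Nonempty (Fin n) := ⟨i⟩
  obtain ⟨r, hr⟩ := exists_eq_ciInf_of_finite (f := fun r : Fin n => Q r r)
  refine ⟨i, by simpa using hi, ?_⟩
  have hnotvertex : x ≠ Pi.single r 1 := fun h => by
    have := card_filter_pos_single_le_one r (1 : ℝ)
    rw [← h] at this
    omega
  calc 1 / (#{i | 0 < x i} : ℝ) * ∑ j ∈ {i | 0 < x i}, Q i j ≤ x ⬝ᵥ Q *ᵥ x := by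
        rwa [one_div_mul_eq_div, div_le_iff₀ hk0, mul_comm]
    _ < ⨅ r : Fin n, Q r r :=
        hr ▸ lt_diag_of_isMinOn_stdSimplex hmin_on (fun y hy h => huniq y hy (isMinOn_iff.1 h))
          hnotvertex
end
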